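/- arXiv:1808.09705 — 5 statements merged into one kernel-verified Lean document; each statement's English description precedes it below -/
import Mathlib

section
/- Let s ≥ 1 and suppose G acts faithfully and transitively on a finite set X. Then the translation subgroup T = ⟨g, h⟩ does not act transitively on X. -/
theorem stmt2 (s : ℕ) (hs : 1 ≤ s)
    (G : Type*) [Group G] [Finite G] (ρ0 ρ1 ρ2 : G)
    (hgen : Subgroup.closure {ρ0, ρ1, ρ2} = ⊤)
    (hr0 : ρ0 ^ 2 = 1) (hr1 : ρ1 ^ 2 = 1) (hr2 : ρ2 ^ 2 = 1)
    (h01 : (ρ0 * ρ1) ^ 4 = 1) (h12 : (ρ1 * ρ2) ^ 4 = 1) (h02 : (ρ0 * ρ2) ^ 2 = 1)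
    (hmap : (ρ0 * ρ1 * ρ2) ^ (2 * s) = 1)
    (hG : Nat.card G = 16 * s ^ 2)
    (g h : G) (hgdef : g = (ρ0 * ρ1 * ρ2) ^ 2) (hhdef : h = ρ0 * g * ρ0)
    (T : Subgroup G) (hT : T = Subgroup.closure {g, h})
    (X : Type*) [Finite X] [MulAction G X]
    (hfaith : ∀ a : G, (∀ x : X, a • x = x) → a = 1)
    (htrans : ∀ x y : X, ∃ a : G, a • x = y)
    : ¬ (∀ x y : X, ∃ t ∈ T, t • x = y) := by
  intro htT
  obtain ⟨s', rfl⟩ : ∃ s', s = s' + 1 := ⟨s - 1, (Nat.succ_pred_eq_of_pos hs).symm⟩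
  set s := s' + 1 with hsdef
  -- basic involution facts
  have haa : ρ0 * ρ0 = 1 := by rw [← pow_two]; exact hr0
  have hbb : ρ1 * ρ1 = 1 := by rw [← pow_two]; exact hr1
  have hcc : ρ2 * ρ2 = 1 := by rw [← pow_two]; exact hr2
  have hai : ρ0⁻¹ = ρ0 := inv_eq_of_mul_eq_one_right haa
  have hbi : ρ1⁻¹ = ρ1 := inv_eq_of_mul_eq_one_right hbb
  have hci : ρ2⁻¹ = ρ2 := inv_eq_of_mul_eq_one_right hcc
  have haa' : ∀ x : G, ρ0 * (ρ0 * x) = x := fun x => by rw [← mul_assoc, haa, one_mul]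
  have hbb' : ∀ x : G, ρ1 * (ρ1 * x) = x := fun x => by rw [← mul_assoc, hbb, one_mul]
  have hcc' : ∀ x : G, ρ2 * (ρ2 * x) = x := fun x => by rw [← mul_assoc, hcc, one_mul]
  have hca : ρ2 * ρ0 = ρ0 * ρ2 := by
    have h1 : (ρ0*ρ2)⁻¹ = ρ0*ρ2 := inv_eq_of_mul_eq_one_right (by rw [← pow_two]; exact h02)
    calc ρ2 * ρ0 = (ρ0*ρ2)⁻¹ := by rw [mul_inv_rev, hai, hci]
    _ = ρ0 * ρ2 := h1
  have hca' : ∀ x : G, ρ2 * (ρ0 * x) = ρ0 * (ρ2 * x) := fun x => by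
    rw [← mul_assoc, hca, mul_assoc]
  have hbaba : ρ1 * (ρ0 * (ρ1 * ρ0)) = ρ0 * (ρ1 * (ρ0 * ρ1)) := by
    have h1 : ((ρ0*ρ1)*(ρ0*ρ1))⁻¹ = (ρ0*ρ1)*(ρ0*ρ1) := inv_eq_of_mul_eq_one_right (by
      have h2 : (ρ0*ρ1)*(ρ0*ρ1)*((ρ0*ρ1)*(ρ0*ρ1)) = (ρ0*ρ1)^4 := by
        simp only [pow_succ, pow_zero, one_mul, mul_assoc]
      rw [h2]; exact h01)
    calc ρ1 * (ρ0 * (ρ1 * ρ0)) = ((ρ0*ρ1)*(ρ0*ρ1))⁻¹ := by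
          simp [mul_inv_rev, hai, hbi, mul_assoc]
    _ = (ρ0*ρ1)*(ρ0*ρ1) := h1
    _ = ρ0 * (ρ1 * (ρ0 * ρ1)) := by simp [mul_assoc]
  have hbaba' : ∀ x : G, ρ1 * (ρ0 * (ρ1 * (ρ0 * x))) = ρ0 * (ρ1 * (ρ0 * (ρ1 * x))) := fun x => by
    rw [show ρ1 * (ρ0 * (ρ1 * (ρ0 * x))) = (ρ1 * (ρ0 * (ρ1 * ρ0))) * x by simp [mul_assoc], hbaba]
    simp [mul_assoc]
  have hcbcb : ρ2 * (ρ1 * (ρ2 * ρ1)) = ρ1 * (ρ2 * (ρ1 * ρ2)) := by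
    have h1 : ((ρ1*ρ2)*(ρ1*ρ2))⁻¹ = (ρ1*ρ2)*(ρ1*ρ2) := inv_eq_of_mul_eq_one_right (by
      have h2 : (ρ1*ρ2)*(ρ1*ρ2)*((ρ1*ρ2)*(ρ1*ρ2)) = (ρ1*ρ2)^4 := by
        simp only [pow_succ, pow_zero, one_mul, mul_assoc]
      rw [h2]; exact h12)
    calc ρ2 * (ρ1 * (ρ2 * ρ1)) = ((ρ1*ρ2)*(ρ1*ρ2))⁻¹ := by
          simp [mul_inv_rev, hbi, hci, mul_assoc]
    _ = (ρ1*ρ2)*(ρ1*ρ2) := h1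
    _ = ρ1 * (ρ2 * (ρ1 * ρ2)) := by simp [mul_assoc]
  have hcbcb' : ∀ x : G, ρ2 * (ρ1 * (ρ2 * (ρ1 * x))) = ρ1 * (ρ2 * (ρ1 * (ρ2 * x))) := fun x => by
    rw [show ρ2 * (ρ1 * (ρ2 * (ρ1 * x))) = (ρ2 * (ρ1 * (ρ2 * ρ1))) * x by simp [mul_assoc], hcbcb]
    simp [mul_assoc]
  -- expansions
  have hgexp : g = ρ0*(ρ1*(ρ2*(ρ0*(ρ1*ρ2)))) := by rw [hgdef, pow_two]; simp [mul_assoc]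
  have hhexp : h = ρ1*(ρ2*(ρ0*(ρ1*(ρ2*ρ0)))) := by
    rw [hhdef, hgexp]
    simp only [ mul_assoc, haa', hbb', hcc', hca', hbaba', hcbcb', haa, hbb, hcc, hca, hbaba, hcbcb, mul_one, one_mul]
  set u : G := ρ2*(ρ1*(ρ0*ρ1)) with hudef
  -- key word identities
  have hug : u * g = g * u := by simp only [hudef, hgexp, hhexp, mul_assoc, haa', hbb', hcc', hca', hbaba', hcbcb', haa, hbb, hcc, hca, hbaba, hcbcb, mul_one, one_mul]
  have hghuu : g * (h * (u * u)) = 1 := by simp only [hudef, hgexp, hhexp, mul_assoc, haa', hbb', hcc', hca', hbaba', hcbcb', haa, hbb, hcc, hca, hbaba, hcbcb, mul_one, one_mul]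
  -- subgroup U
  set U : Subgroup G := Subgroup.closure {g, u} with hUdef
  have hgU : g ∈ U := Subgroup.subset_closure (Or.inl rfl)
  have huU : u ∈ U := Subgroup.subset_closure (Or.inr rfl)
  have hhU : h ∈ U := by
    have h2 : h * (u*u) = g⁻¹ := (inv_eq_of_mul_eq_one_right hghuu).symm
    have h4 : h = g⁻¹ * (u*u)⁻¹ := by rw [← h2]; group
    rw [h4]; exact mul_mem (inv_mem hgU) (inv_mem (mul_mem huU huU))
  have hgT : g ∈ T := by rw [hT]; exact Subgroup.subset_closure (Or.inl rfl)
  have hhT : h ∈ T := by rw [hT]; exact Subgroup.subset_closure (Or.inr rfl)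
  have hTU : T ≤ U := by
    rw [hT]; exact (Subgroup.closure_le U).2 (by rintro x (rfl|rfl); exacts [hgU, hhU])
  -- U is commutative
  have hcg : U ≤ Subgroup.centralizer {g} := by
    rw [hUdef]
    refine (Subgroup.closure_le _).2 ?_
    rintro x (rfl|rfl)
    · exact Subgroup.mem_centralizer_iff.2 (fun z hz => by rw [Set.eq_of_mem_singleton hz])
    · exact Subgroup.mem_centralizer_iff.2 (fun z hz => by
        rw [Set.eq_of_mem_singleton hz]; exact hug.symm)
  have hcu : U ≤ Subgroup.centralizer {u} := by
    rw [hUdef]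
    refine (Subgroup.closure_le _).2 ?_
    rintro x (rfl|rfl)
    · exact Subgroup.mem_centralizer_iff.2 (fun z hz => by
        rw [Set.eq_of_mem_singleton hz]; exact hug)
    · exact Subgroup.mem_centralizer_iff.2 (fun z hz => by rw [Set.eq_of_mem_singleton hz])
  have hcomm : ∀ x ∈ U, ∀ y ∈ U, x * y = y * x := by
    have hcent : U ≤ Subgroup.centralizer (U : Set G) := by
      rw [hUdef]
      refine (Subgroup.closure_le _).2 ?_
      rintro z (rfl|rfl)
      · exact Subgroup.mem_centralizer_iff.2 (fun w hw =>
          (Subgroup.mem_centralizer_iff.1 (hcg hw) _ (Set.mem_singleton _)).symm)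
      · exact Subgroup.mem_centralizer_iff.2 (fun w hw =>
          (Subgroup.mem_centralizer_iff.1 (hcu hw) _ (Set.mem_singleton _)).symm)
    intro x hx y hy
    exact Subgroup.mem_centralizer_iff.1 (hcent hy) x hx
  -- powers
  have hgs : g ^ s = 1 := by rw [hgdef, ← pow_mul]; exact hmap
  have hhs : h ^ s = 1 := by
    rw [hhdef, show ρ0 * g * ρ0 = ρ0 * g * ρ0⁻¹ by rw [hai], conj_pow, hgs]
    rw [hai]; rw [mul_one]; exact haa
  -- X nonempty
  rcases isEmpty_or_nonempty X with hE | hNE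
  · have hone : ∀ a : G, a = 1 := fun a => hfaith a (fun x => (hE.false x).elim)
    have h1 : Nat.card G = 1 := Nat.card_eq_one_iff_unique.2 ⟨⟨fun x y => by rw [hone x, hone y]⟩, ⟨1⟩⟩
    rw [hG] at h1
    have hp : 1 ≤ s ^ 2 := Nat.one_le_pow _ _ (by omega)
    revert h1 hp; generalize s ^ 2 = p; intro h1 hp; omega
  obtain ⟨x₀⟩ := hNE
  -- u ∈ T
  obtain ⟨t, htm, hteq⟩ := htT x₀ (u • x₀)
  have hd : ∀ y : X, (t⁻¹ * u) • y = y := by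
    intro y
    obtain ⟨t', ht'm, rfl⟩ := htT x₀ y
    have c1 : u * t' = t' * u := hcomm u huU t' (hTU ht'm)
    have c2 : t * t' = t' * t := hcomm t (hTU htm) t' (hTU ht'm)
    have c3 : t⁻¹ * t' = t' * t⁻¹ := by
      calc t⁻¹ * t' = t⁻¹ * (t' * t) * t⁻¹ := by group
      _ = t⁻¹ * (t * t') * t⁻¹ := by rw [← c2]
      _ = t' * t⁻¹ := by group
    have e : (t⁻¹*u)*t' = t'*(t⁻¹*u) := by
      rw [mul_assoc, c1, ← mul_assoc, c3, mul_assoc]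
    rw [smul_smul, e, mul_smul, mul_smul, ← hteq, inv_smul_smul]
  have hu1 : t⁻¹ * u = 1 := hfaith _ hd
  have huT : u ∈ T := by
    have : t = u := inv_mul_eq_one.mp hu1
    exact this ▸ htm
  -- hence U ≤ T
  have hUT : U ≤ T := by
    rw [hUdef]; exact (Subgroup.closure_le T).2 (by rintro x (rfl|rfl); exacts [hgT, huT])
  -- card T ≤ s * s
  have hghform : ∀ x ∈ T, ∃ i j : ℕ, x = g^i * h^j := by
    intro x hx
    rw [hT] at hx
    refine Subgroup.closure_induction ?_ ?_ ?_ ?_ hx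
    · rintro y (rfl|rfl)
      · exact ⟨1, 0, by simp⟩
      · exact ⟨0, 1, by simp⟩
    · exact ⟨0, 0, by simp⟩
    · rintro y z hy hz ⟨i, j, rfl⟩ ⟨i', j', rfl⟩
      refine ⟨i + i', j + j', ?_⟩
      have c1 : h^j * g^i' = g^i' * h^j :=
        hcomm _ (pow_mem hhU j) _ (pow_mem hgU i')
      rw [pow_add, pow_add]
      calc g^i * h^j * (g^i' * h^j') = g^i * (h^j * g^i') * h^j' := by simp [mul_assoc]
      _ = g^i * (g^i' * h^j) * h^j' := by rw [c1]
      _ = g^i * g^i' * (h^j * h^j') := by simp [mul_assoc]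
    · rintro y hy ⟨i, j, rfl⟩
      refine ⟨i * s', j * s', ?_⟩
      have hgi : (g^i)⁻¹ = g^(i*s') := inv_eq_of_mul_eq_one_right (by
        rw [← pow_add, show i + i * s' = s * i by rw [hsdef]; ring, pow_mul, hgs, one_pow])
      have hhi : (h^j)⁻¹ = h^(j*s') := inv_eq_of_mul_eq_one_right (by
        rw [← pow_add, show j + j * s' = s * j by rw [hsdef]; ring, pow_mul, hhs, one_pow])
      rw [mul_inv_rev, hgi, hhi]
      exact hcomm _ (pow_mem hhU _) _ (pow_mem hgU _)
  have hcardT : Nat.card T ≤ s * s := by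
    have hslt : 0 < s := by omega
    let F : Fin s × Fin s → T := fun p =>
      ⟨g^(p.1 : ℕ) * h^(p.2 : ℕ), mul_mem (pow_mem hgT _) (pow_mem hhT _)⟩
    have hF : Function.Surjective F := by
      rintro ⟨x, hx⟩
      obtain ⟨i, j, rfl⟩ := hghform x hx
      refine ⟨(⟨i % s, Nat.mod_lt _ hslt⟩, ⟨j % s, Nat.mod_lt _ hslt⟩), ?_⟩
      apply Subtype.ext
      show g^(i % s) * h^(j % s) = g^i * h^j
      have e1 : g^i = g^(i % s) := by
        conv_lhs => rw [← Nat.div_add_mod i s]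
        rw [pow_add, pow_mul, hgs, one_pow, one_mul]
      have e2 : h^j = h^(j % s) := by
        conv_lhs => rw [← Nat.div_add_mod j s]
        rw [pow_add, pow_mul, hhs, one_pow, one_mul]
      rw [e1, e2]
    calc Nat.card T ≤ Nat.card (Fin s × Fin s) := Nat.card_le_card_of_surjective F hF
    _ = s * s := by simp
  -- coset cover of G by 8 cosets of U
  have step : ∀ w : G,
      ((1:G) = w ∨ ρ0 = w ∨ ρ1 = w ∨ ρ0*ρ1 = w ∨ ρ1*ρ0 = w ∨ ρ0*(ρ1*ρ0) = w ∨ ρ1*(ρ0*ρ1) = w ∨ ρ0*(ρ1*(ρ0*ρ1)) = w) →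
      ∀ y : G, (ρ0 = y ∨ ρ1 = y ∨ ρ2 = y) →
      ∃ v, v ∈ U ∧ ∃ w',
        ((1:G) = w' ∨ ρ0 = w' ∨ ρ1 = w' ∨ ρ0*ρ1 = w' ∨ ρ1*ρ0 = w' ∨ ρ0*(ρ1*ρ0) = w' ∨ ρ1*(ρ0*ρ1) = w' ∨ ρ0*(ρ1*(ρ0*ρ1)) = w') ∧
        w * y = v * w' := by
    rintro w (rfl|rfl|rfl|rfl|rfl|rfl|rfl|rfl) y (rfl|rfl|rfl)
    · exact ⟨(1:G), one_mem U, ρ0, Or.inr (Or.inl rfl), by simp only [hudef, hgexp, hhexp, mul_assoc, haa', hbb', hcc', hca', hbaba', hcbcb', haa, hbb, hcc, hca, hbaba, hcbcb, mul_one, one_mul]⟩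
    · exact ⟨(1:G), one_mem U, ρ1, Or.inr (Or.inr (Or.inl rfl)), by simp only [hudef, hgexp, hhexp, mul_assoc, haa', hbb', hcc', hca', hbaba', hcbcb', haa, hbb, hcc, hca, hbaba, hcbcb, mul_one, one_mul]⟩
    · exact ⟨u, huU, ρ1*(ρ0*ρ1), Or.inr (Or.inr (Or.inr (Or.inr (Or.inr (Or.inr (Or.inl rfl)))))), by simp only [hudef, hgexp, hhexp, mul_assoc, haa', hbb', hcc', hca', hbaba', hcbcb', haa, hbb, hcc, hca, hbaba, hcbcb, mul_one, one_mul]⟩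
    · exact ⟨(1:G), one_mem U, (1:G), Or.inl rfl, by simp only [hudef, hgexp, hhexp, mul_assoc, haa', hbb', hcc', hca', hbaba', hcbcb', haa, hbb, hcc, hca, hbaba, hcbcb, mul_one, one_mul]⟩
    · exact ⟨(1:G), one_mem U, ρ0*ρ1, Or.inr (Or.inr (Or.inr (Or.inl rfl))), by simp only [hudef, hgexp, hhexp, mul_assoc, haa', hbb', hcc', hca', hbaba', hcbcb', haa, hbb, hcc, hca, hbaba, hcbcb, mul_one, one_mul]⟩
    · exact ⟨u, huU, ρ0*(ρ1*(ρ0*ρ1)), Or.inr (Or.inr (Or.inr (Or.inr (Or.inr (Or.inr (Or.inr rfl)))))), by simp only [hudef, hgexp, hhexp, mul_assoc, haa', hbb', hcc', hca', hbaba', hcbcb', haa, hbb, hcc, hca, hbaba, hcbcb, mul_one, one_mul]⟩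
    · exact ⟨(1:G), one_mem U, ρ1*ρ0, Or.inr (Or.inr (Or.inr (Or.inr (Or.inl rfl)))), by simp only [hudef, hgexp, hhexp, mul_assoc, haa', hbb', hcc', hca', hbaba', hcbcb', haa, hbb, hcc, hca, hbaba, hcbcb, mul_one, one_mul]⟩
    · exact ⟨(1:G), one_mem U, (1:G), Or.inl rfl, by simp only [hudef, hgexp, hhexp, mul_assoc, haa', hbb', hcc', hca', hbaba', hcbcb', haa, hbb, hcc, hca, hbaba, hcbcb, mul_one, one_mul]⟩
    · exact ⟨h*u, mul_mem hhU huU, ρ0*ρ1, Or.inr (Or.inr (Or.inr (Or.inl rfl))), by simp only [hudef, hgexp, hhexp, mul_assoc, haa', hbb', hcc', hca', hbaba', hcbcb', haa, hbb, hcc, hca, hbaba, hcbcb, mul_one, one_mul]⟩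
    · exact ⟨(1:G), one_mem U, ρ0*(ρ1*ρ0), Or.inr (Or.inr (Or.inr (Or.inr (Or.inr (Or.inl rfl))))), by simp only [hudef, hgexp, hhexp, mul_assoc, haa', hbb', hcc', hca', hbaba', hcbcb', haa, hbb, hcc, hca, hbaba, hcbcb, mul_one, one_mul]⟩
    · exact ⟨(1:G), one_mem U, ρ0, Or.inr (Or.inl rfl), by simp only [hudef, hgexp, hhexp, mul_assoc, haa', hbb', hcc', hca', hbaba', hcbcb', haa, hbb, hcc, hca, hbaba, hcbcb, mul_one, one_mul]⟩
    · exact ⟨g*u, mul_mem hgU huU, ρ1, Or.inr (Or.inr (Or.inl rfl)), by simp only [hudef, hgexp, hhexp, mul_assoc, haa', hbb', hcc', hca', hbaba', hcbcb', haa, hbb, hcc, hca, hbaba, hcbcb, mul_one, one_mul]⟩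
    · exact ⟨(1:G), one_mem U, ρ1, Or.inr (Or.inr (Or.inl rfl)), by simp only [hudef, hgexp, hhexp, mul_assoc, haa', hbb', hcc', hca', hbaba', hcbcb', haa, hbb, hcc, hca, hbaba, hcbcb, mul_one, one_mul]⟩
    · exact ⟨(1:G), one_mem U, ρ1*(ρ0*ρ1), Or.inr (Or.inr (Or.inr (Or.inr (Or.inr (Or.inr (Or.inl rfl)))))), by simp only [hudef, hgexp, hhexp, mul_assoc, haa', hbb', hcc', hca', hbaba', hcbcb', haa, hbb, hcc, hca, hbaba, hcbcb, mul_one, one_mul]⟩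
    · exact ⟨h*u, mul_mem hhU huU, ρ0*(ρ1*ρ0), Or.inr (Or.inr (Or.inr (Or.inr (Or.inr (Or.inl rfl))))), by simp only [hudef, hgexp, hhexp, mul_assoc, haa', hbb', hcc', hca', hbaba', hcbcb', haa, hbb, hcc, hca, hbaba, hcbcb, mul_one, one_mul]⟩
    · exact ⟨(1:G), one_mem U, ρ0*ρ1, Or.inr (Or.inr (Or.inr (Or.inl rfl))), by simp only [hudef, hgexp, hhexp, mul_assoc, haa', hbb', hcc', hca', hbaba', hcbcb', haa, hbb, hcc, hca, hbaba, hcbcb, mul_one, one_mul]⟩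
    · exact ⟨(1:G), one_mem U, ρ0*(ρ1*(ρ0*ρ1)), Or.inr (Or.inr (Or.inr (Or.inr (Or.inr (Or.inr (Or.inr rfl)))))), by simp only [hudef, hgexp, hhexp, mul_assoc, haa', hbb', hcc', hca', hbaba', hcbcb', haa, hbb, hcc, hca, hbaba, hcbcb, mul_one, one_mul]⟩
    · exact ⟨g*u, mul_mem hgU huU, ρ1*ρ0, Or.inr (Or.inr (Or.inr (Or.inr (Or.inl rfl)))), by simp only [hudef, hgexp, hhexp, mul_assoc, haa', hbb', hcc', hca', hbaba', hcbcb', haa, hbb, hcc, hca, hbaba, hcbcb, mul_one, one_mul]⟩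
    · exact ⟨(1:G), one_mem U, ρ0*(ρ1*(ρ0*ρ1)), Or.inr (Or.inr (Or.inr (Or.inr (Or.inr (Or.inr (Or.inr rfl)))))), by simp only [hudef, hgexp, hhexp, mul_assoc, haa', hbb', hcc', hca', hbaba', hcbcb', haa, hbb, hcc, hca, hbaba, hcbcb, mul_one, one_mul]⟩
    · exact ⟨(1:G), one_mem U, ρ1*ρ0, Or.inr (Or.inr (Or.inr (Or.inr (Or.inl rfl)))), by simp only [hudef, hgexp, hhexp, mul_assoc, haa', hbb', hcc', hca', hbaba', hcbcb', haa, hbb, hcc, hca, hbaba, hcbcb, mul_one, one_mul]⟩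
    · exact ⟨g*(h*u), mul_mem hgU (mul_mem hhU huU), (1:G), Or.inl rfl, by simp only [hudef, hgexp, hhexp, mul_assoc, haa', hbb', hcc', hca', hbaba', hcbcb', haa, hbb, hcc, hca, hbaba, hcbcb, mul_one, one_mul]⟩
    · exact ⟨(1:G), one_mem U, ρ1*(ρ0*ρ1), Or.inr (Or.inr (Or.inr (Or.inr (Or.inr (Or.inr (Or.inl rfl)))))), by simp only [hudef, hgexp, hhexp, mul_assoc, haa', hbb', hcc', hca', hbaba', hcbcb', haa, hbb, hcc, hca, hbaba, hcbcb, mul_one, one_mul]⟩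
    · exact ⟨(1:G), one_mem U, ρ0*(ρ1*ρ0), Or.inr (Or.inr (Or.inr (Or.inr (Or.inr (Or.inl rfl))))), by simp only [hudef, hgexp, hhexp, mul_assoc, haa', hbb', hcc', hca', hbaba', hcbcb', haa, hbb, hcc, hca, hbaba, hcbcb, mul_one, one_mul]⟩
    · exact ⟨g*(h*u), mul_mem hgU (mul_mem hhU huU), ρ0, Or.inr (Or.inl rfl), by simp only [hudef, hgexp, hhexp, mul_assoc, haa', hbb', hcc', hca', hbaba', hcbcb', haa, hbb, hcc, hca, hbaba, hcbcb, mul_one, one_mul]⟩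
  have cover : ∀ x : G, ∃ v, v ∈ U ∧ ∃ w,
      ((1:G) = w ∨ ρ0 = w ∨ ρ1 = w ∨ ρ0*ρ1 = w ∨ ρ1*ρ0 = w ∨ ρ0*(ρ1*ρ0) = w ∨ ρ1*(ρ0*ρ1) = w ∨ ρ0*(ρ1*(ρ0*ρ1)) = w) ∧
      x = v * w := by
    have key : ∀ l : List G, (∀ y ∈ l, ρ0 = y ∨ ρ1 = y ∨ ρ2 = y) →
        ∃ v, v ∈ U ∧ ∃ w,
        ((1:G) = w ∨ ρ0 = w ∨ ρ1 = w ∨ ρ0*ρ1 = w ∨ ρ1*ρ0 = w ∨ ρ0*(ρ1*ρ0) = w ∨ ρ1*(ρ0*ρ1) = w ∨ ρ0*(ρ1*(ρ0*ρ1)) = w) ∧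
        l.prod = v * w := by
      intro l
      induction l using List.reverseRecOn with
      | nil => exact fun _ => ⟨1, one_mem U, 1, Or.inl rfl, by simp⟩
      | append_singleton l y ih =>
        intro hl
        obtain ⟨v, hv, w, hw, hpe⟩ := ih (fun z hz => hl z (List.mem_append_left _ hz))
        have hy : ρ0 = y ∨ ρ1 = y ∨ ρ2 = y := hl y (List.mem_append_right _ (List.mem_singleton_self y))
        obtain ⟨v', hv', w', hw', he⟩ := step w hw y hy
        refine ⟨v * v', mul_mem hv hv', w', hw', ?_⟩
        rw [List.prod_append, List.prod_singleton, hpe, mul_assoc, he, ← mul_assoc]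
    intro x
    have hx : x ∈ Subgroup.closure ({ρ0, ρ1, ρ2} : Set G) := by rw [hgen]; trivial
    have hx2 : x ∈ Submonoid.closure (({ρ0, ρ1, ρ2} : Set G) ∪ ({ρ0, ρ1, ρ2} : Set G)⁻¹) := by
      rw [← Subgroup.closure_toSubmonoid]; exact hx
    obtain ⟨l, hl, rfl⟩ := Submonoid.exists_list_of_mem_closure hx2
    refine key l ?_
    intro y hy
    rcases hl y hy with h1 | h2
    · rcases h1 with h3|h3|h3
      · exact Or.inl h3.symm
      · exact Or.inr (Or.inl h3.symm)
      · exact Or.inr (Or.inr h3.symm)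
    · rw [Set.mem_inv] at h2
      rcases h2 with h3|h3|h3
      · left; rw [← hai, ← h3, inv_inv]
      · right; left; rw [← hbi, ← h3, inv_inv]
      · right; right; rw [← hci, ← h3, inv_inv]
  -- card G ≤ card U * 8
  have hcardG : Nat.card G ≤ Nat.card U * 8 := by
    let Wf : Fin 8 → G := ![1, ρ0, ρ1, ρ0*ρ1, ρ1*ρ0, ρ0*(ρ1*ρ0), ρ1*(ρ0*ρ1), ρ0*(ρ1*(ρ0*ρ1))]
    let F2 : U × Fin 8 → G := fun p => (p.1 : G) * Wf p.2
    have hF2 : Function.Surjective F2 := by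
      intro x
      obtain ⟨v, hv, w, hw, rfl⟩ := cover x
      rcases hw with rfl|rfl|rfl|rfl|rfl|rfl|rfl|rfl
      · exact ⟨(⟨v, hv⟩, 0), rfl⟩
      · exact ⟨(⟨v, hv⟩, 1), rfl⟩
      · exact ⟨(⟨v, hv⟩, 2), rfl⟩
      · exact ⟨(⟨v, hv⟩, 3), rfl⟩
      · exact ⟨(⟨v, hv⟩, 4), rfl⟩
      · exact ⟨(⟨v, hv⟩, 5), rfl⟩
      · exact ⟨(⟨v, hv⟩, 6), rfl⟩
      · exact ⟨(⟨v, hv⟩, 7), rfl⟩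
    calc Nat.card G ≤ Nat.card (U × Fin 8) := Nat.card_le_card_of_surjective F2 hF2
    _ = Nat.card U * 8 := by rw [Nat.card_prod]; simp
  -- final contradiction
  have hUcard : Nat.card U ≤ Nat.card T := Subgroup.card_le_of_le hUT
  have hfin : (16 : ℕ) * s ^ 2 ≤ (s * s) * 8 := by
    rw [← hG]
    calc Nat.card G ≤ Nat.card U * 8 := hcardG
    _ ≤ Nat.card T * 8 := by omega
    _ ≤ (s * s) * 8 := by omega
  have hss : s * s = s ^ 2 := by ring
  rw [hss] at hfin
  have hp : 1 ≤ s ^ 2 := Nat.one_le_pow _ _ (by omega)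
  revert hfin hp; generalize s ^ 2 = p; intro hfin hp; omega
end

section
/- Let s ≥ 1 and suppose G acts faithfully and transitively on a finite set X. Then the translation subgroup T = ⟨g, h⟩ does not act transitively on X. -/
/-!
The reflections `ρ0, ρ1, ρ2` satisfy the Coxeter relations of type `[3,6]`, so `G` is a quotient
of the wallpaper group `p6m`. There the translations `τ₁ = ρ0 (ρ1 ρ2)² ρ1` and `τ₂ = ρ1 τ₁ ρ1`
commute and generate a normal subgroup `Λ` with `G = ⟨ρ1, ρ2⟩ Λ`, so `|G| ≤ 12 |Λ|`. Moreover
`g = τ₁ τ₂` and `h = ρ0 g ρ0` lie in `Λ` and satisfy `g ^ s = h ^ s = 1`, so `|T| ≤ s²`. If the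
abelian group `T` were transitive on the faithful `G`-set `X`, it would contain its centralizer,
hence `Λ`, and then `36 s² = |G| ≤ 12 s²`.
-/

open Subgroup

section

variable {G : Type*} [Group G]

theorem inv_eq_self_of_sq_eq_one {x : G} (h : x ^ 2 = 1) : x⁻¹ = x :=
  inv_eq_of_mul_eq_one_right (by rwa [← pow_two])

theorem Subgroup.card_sup_le_of_le_normalizer {H N : Subgroup G} (h : H ≤ normalizer (N : Set G)) :
    Nat.card ↥(H ⊔ N) ≤ Nat.card H * Nat.card N := by
  have := Set.natCard_mul_le (s := (H : Set G)) (t := N)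
  rwa [← coe_mul_of_left_le_normalizer_right H N h] at this

theorem Subgroup.mem_normalizer_closure_of_conj_mem [Finite G] {x : G} {s : Set G}
    (h : ∀ g ∈ s, x * g * x⁻¹ ∈ closure s) : x ∈ normalizer (closure s : Set G) :=
  mem_normalizer_fintype fun _ hn =>
    (closure_le ((closure s).comap (MulAut.conj x).toMonoidHom)).2 h hn

theorem Subgroup.card_closure_pair_le [Finite G] {x y : G} (h : zpowers (x * y * x⁻¹) = zpowers y) :
    Nat.card (closure {x, y}) ≤ orderOf x * orderOf y := by
  have hx : x ∈ normalizer (zpowers y : Set G) := by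
    rw [mem_normalizer_iff_map_conj_eq, MonoidHom.map_zpowers]
    exact h
  rw [Set.insert_eq, Subgroup.closure_union, ← zpowers_eq_closure, ← zpowers_eq_closure,
    ← Nat.card_zpowers, ← Nat.card_zpowers]
  exact card_sup_le_of_le_normalizer (zpowers_le.2 hx)

theorem Subgroup.card_closure_pair_le_of_commute [Finite G] {x y : G} (hxy : Commute x y) {n : ℕ}
    (hn : 0 < n) (hx : x ^ n = 1) (hy : y ^ n = 1) : Nat.card (closure {x, y}) ≤ n * n := by
  refine (card_closure_pair_le ?_).trans
    (Nat.mul_le_mul (orderOf_le_of_pow_eq_one hn hx) (orderOf_le_of_pow_eq_one hn hy))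
  rw [hxy.eq, mul_inv_cancel_right]

theorem Subgroup.card_closure_pair_le_of_sq_eq_one [Finite G] {x y : G} (hx : x ^ 2 = 1)
    (hy : y ^ 2 = 1) {n : ℕ} (hn : 0 < n) (hxy : (x * y) ^ n = 1) :
    Nat.card (closure {x, y}) ≤ 2 * n := by
  have hle : closure {x, y} ≤ closure {x, x * y} := by
    have hx' : x ∈ closure {x, x * y} := subset_closure (by simp)
    have hxy' : x * y ∈ closure {x, x * y} := subset_closure (by simp)
    rw [closure_le]
    rintro _ (rfl | rfl)
    · exact hx'
    · simpa using mul_mem (inv_mem hx') hxy'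
  have hconj : zpowers (x * (x * y) * x⁻¹) = zpowers (x * y) := by
    rw [← zpowers_inv (g := x * y), mul_inv_rev, inv_eq_self_of_sq_eq_one hx,
      inv_eq_self_of_sq_eq_one hy, ← mul_assoc, ← pow_two, hx, one_mul]
  refine (card_le_of_le hle).trans <| (card_closure_pair_le hconj).trans
    (Nat.mul_le_mul (orderOf_le_of_pow_eq_one two_pos hx) (orderOf_le_of_pow_eq_one hn hxy))

theorem Subgroup.centralizer_le_of_isPretransitive (X : Type*) [MulAction G X] [FaithfulSMul G X]
    (H : Subgroup G) [IsMulCommutative H] [MulAction.IsPretransitive H X] :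
    centralizer (H : Set G) ≤ H := by
  intro u hu
  rcases isEmpty_or_nonempty X with hX | ⟨⟨x₀⟩⟩
  · rw [eq_of_smul_eq_smul (α := X) (m₁ := u) (m₂ := 1) fun x => isEmptyElim x]
    exact one_mem H
  obtain ⟨t, ht⟩ := MulAction.exists_smul_eq H x₀ (u • x₀)
  suffices (t : G) = u from this ▸ t.2
  refine eq_of_smul_eq_smul (α := X) fun x => ?_
  obtain ⟨t', rfl⟩ := MulAction.exists_smul_eq H x₀ x
  have htt' : (t : G) * t' = t' * t := le_centralizer H t'.2 t t.2
  have hut' : (t' : G) * u = u * t' := hu t' t'.2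
  simp only [Subgroup.smul_def] at ht ⊢
  rw [← mul_smul, htt', mul_smul, ht, ← mul_smul, hut', mul_smul]

structure IsCoxeter36 (ρ0 ρ1 ρ2 : G) : Prop where
  sq0 : ρ0 ^ 2 = 1
  sq1 : ρ1 ^ 2 = 1
  sq2 : ρ2 ^ 2 = 1
  pow01 : (ρ0 * ρ1) ^ 3 = 1
  pow12 : (ρ1 * ρ2) ^ 6 = 1
  pow02 : (ρ0 * ρ2) ^ 2 = 1

namespace IsCoxeter36

variable {ρ0 ρ1 ρ2 : G}

/-- Together with `mul_assoc`, these rules form a terminating and confluent (shortlex) rewriting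
system for the Coxeter group `[3,6]`: Knuth–Bendix completion of the defining relations adds only
the last rule. Hence `simp only` with them decides equality of words in `ρ0, ρ1, ρ2`. As the rules
act on a tail `x`, identities are proved after appending `* 1` with `mul_right_cancel`. -/
theorem rewrite_rules (hρ : IsCoxeter36 ρ0 ρ1 ρ2) :
    (ρ0⁻¹ = ρ0 ∧ ρ1⁻¹ = ρ1 ∧ ρ2⁻¹ = ρ2) ∧ ∀ x : G,
      ρ0 * (ρ0 * x) = x ∧ ρ1 * (ρ1 * x) = x ∧ ρ2 * (ρ2 * x) = x ∧
      ρ2 * (ρ0 * x) = ρ0 * (ρ2 * x) ∧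
      ρ1 * (ρ0 * (ρ1 * x)) = ρ0 * (ρ1 * (ρ0 * x)) ∧
      ρ2 * (ρ1 * (ρ2 * (ρ1 * (ρ2 * (ρ1 * x))))) = ρ1 * (ρ2 * (ρ1 * (ρ2 * (ρ1 * (ρ2 * x))))) ∧
      ρ2 * (ρ1 * (ρ2 * (ρ1 * (ρ0 * (ρ2 * (ρ1 * (ρ0 * x))))))) =
        ρ1 * (ρ2 * (ρ1 * (ρ2 * (ρ1 * (ρ0 * (ρ2 * (ρ1 * x))))))) := by
  have i0 := inv_eq_self_of_sq_eq_one hρ.sq0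
  have i1 := inv_eq_self_of_sq_eq_one hρ.sq1
  have i2 := inv_eq_self_of_sq_eq_one hρ.sq2
  have c02 : ρ2 * ρ0 = ρ0 * ρ2 := by
    have := eq_inv_of_mul_eq_one_left ((pow_two (ρ0 * ρ2)).symm.trans hρ.pow02)
    simpa [i0, i2] using this.symm
  have b01 : ρ1 * ρ0 * ρ1 = ρ0 * ρ1 * ρ0 := by
    have := eq_inv_of_mul_eq_one_left (a := ρ0 * ρ1 * ρ0) (b := ρ1 * ρ0 * ρ1)
      (by rw [← hρ.pow01]; simp only [pow_succ, pow_zero, one_mul, mul_assoc])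
    simpa [i0, i1, mul_assoc] using this.symm
  have b12 : ρ2 * ρ1 * ρ2 * ρ1 * ρ2 * ρ1 = ρ1 * ρ2 * ρ1 * ρ2 * ρ1 * ρ2 := by
    have := eq_inv_of_mul_eq_one_left (a := ρ1 * ρ2 * ρ1 * ρ2 * ρ1 * ρ2)
      (b := ρ1 * ρ2 * ρ1 * ρ2 * ρ1 * ρ2)
      (by rw [← hρ.pow12]; simp only [pow_succ, pow_zero, one_mul, mul_assoc])
    simpa [i1, i2, mul_assoc] using this.symm
  have t02 (x : G) : ρ2 * (ρ0 * x) = ρ0 * (ρ2 * x) := by simp only [← mul_assoc, c02]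
  have t01 (x : G) : ρ1 * (ρ0 * (ρ1 * x)) = ρ0 * (ρ1 * (ρ0 * x)) := by
    simp only [← mul_assoc, b01]
  have t12 (x : G) : ρ2 * (ρ1 * (ρ2 * (ρ1 * (ρ2 * (ρ1 * x))))) =
      ρ1 * (ρ2 * (ρ1 * (ρ2 * (ρ1 * (ρ2 * x))))) := by simp only [← mul_assoc, b12]
  refine ⟨⟨i0, i1, i2⟩, fun x => ⟨?_, ?_, ?_, t02 x, t01 x, t12 x, ?_⟩⟩
  · rw [← mul_assoc, ← pow_two, hρ.sq0, one_mul]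
  · rw [← mul_assoc, ← pow_two, hρ.sq1, one_mul]
  · rw [← mul_assoc, ← pow_two, hρ.sq2, one_mul]
  · rw [← t02 (ρ1 * (ρ0 * x)), ← t01 x, t12 (ρ0 * (ρ1 * x)), t02 (ρ1 * x)]

end IsCoxeter36

section Translations

variable (ρ0 ρ1 ρ2 : G)

/-- `(ρ1 * ρ2) ^ 2 * ρ1` is the reflection fixing the base vertex whose mirror is parallel to that
of `ρ0`, so this product of two reflections is a translation. -/
def unitTranslationA : G := ρ0 * ((ρ1 * ρ2) ^ 2 * ρ1)

def unitTranslationB : G := ρ1 * unitTranslationA ρ0 ρ1 ρ2 * ρ1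

def translationLattice : Subgroup G :=
  closure {unitTranslationA ρ0 ρ1 ρ2, unitTranslationB ρ0 ρ1 ρ2}

theorem unitTranslationA_mem : unitTranslationA ρ0 ρ1 ρ2 ∈ translationLattice ρ0 ρ1 ρ2 :=
  subset_closure (by simp)

theorem unitTranslationB_mem : unitTranslationB ρ0 ρ1 ρ2 ∈ translationLattice ρ0 ρ1 ρ2 :=
  subset_closure (by simp)

end Translations

namespace IsCoxeter36

variable {ρ0 ρ1 ρ2 : G}

local notation "τ₁" => unitTranslationA ρ0 ρ1 ρ2
local notation "τ₂" => unitTranslationB ρ0 ρ1 ρ2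
local notation "Λ" => translationLattice ρ0 ρ1 ρ2

theorem unitTranslationA_mul_unitTranslationB (hρ : IsCoxeter36 ρ0 ρ1 ρ2) :
    τ₁ * τ₂ = (ρ0 * (ρ1 * ρ2) ^ 2) ^ 2 := by
  apply mul_right_cancel (b := (1 : G))
  simp only [unitTranslationA, unitTranslationB, pow_two, mul_assoc, hρ.rewrite_rules]

theorem commute_unitTranslations (hρ : IsCoxeter36 ρ0 ρ1 ρ2) : Commute τ₁ τ₂ := by
  show τ₁ * τ₂ = τ₂ * τ₁
  apply mul_right_cancel (b := (1 : G))
  simp only [unitTranslationA, unitTranslationB, pow_two, mul_assoc, hρ.rewrite_rules]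

theorem translationLattice_le_centralizer (hρ : IsCoxeter36 ρ0 ρ1 ρ2) :
    Λ ≤ centralizer (Λ : Set G) :=
  le_centralizer_iff_isMulCommutative.2 <| isMulCommutative_closure <| by
    rintro _ (rfl | rfl) _ (rfl | rfl)
    exacts [rfl, hρ.commute_unitTranslations, hρ.commute_unitTranslations.symm, rfl]

theorem conj_unitTranslations (hρ : IsCoxeter36 ρ0 ρ1 ρ2) :
    ρ0 * τ₁ * ρ0⁻¹ = τ₁⁻¹ ∧ ρ0 * τ₂ * ρ0⁻¹ = τ₁⁻¹ * τ₂ ∧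
    ρ1 * τ₁ * ρ1⁻¹ = τ₂ ∧ ρ1 * τ₂ * ρ1⁻¹ = τ₁ ∧
    ρ2 * τ₁ * ρ2⁻¹ = τ₁ ∧ ρ2 * τ₂ * ρ2⁻¹ = τ₁ * τ₂⁻¹ := by
  refine ⟨?_, ?_, ?_, ?_, ?_, ?_⟩ <;> apply mul_right_cancel (b := (1 : G)) <;>
    simp only [unitTranslationA, unitTranslationB, pow_two, mul_assoc, mul_inv_rev,
      hρ.rewrite_rules]

theorem translationLattice_normal [Finite G] (hρ : IsCoxeter36 ρ0 ρ1 ρ2)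
    (hgen : closure {ρ0, ρ1, ρ2} = ⊤) : (Λ).Normal := by
  obtain ⟨h0a, h0b, h1a, h1b, h2a, h2b⟩ := hρ.conj_unitTranslations
  have ha := unitTranslationA_mem ρ0 ρ1 ρ2
  have hb := unitTranslationB_mem ρ0 ρ1 ρ2
  rw [← normalizer_eq_top_iff, eq_top_iff, ← hgen, closure_le]
  simp only [Set.insert_subset_iff, Set.singleton_subset_iff, SetLike.mem_coe]
  refine ⟨?_, ?_, ?_⟩ <;> refine mem_normalizer_closure_of_conj_mem ?_ <;>
    simp only [Set.mem_insert_iff, Set.mem_singleton_iff, forall_eq_or_imp, forall_eq]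
  · rw [h0a, h0b]; exact ⟨inv_mem ha, mul_mem (inv_mem ha) hb⟩
  · rw [h1a, h1b]; exact ⟨hb, ha⟩
  · rw [h2a, h2b]; exact ⟨ha, mul_mem ha (inv_mem hb)⟩

theorem card_le_twelve_mul_card_translationLattice [Finite G] (hρ : IsCoxeter36 ρ0 ρ1 ρ2)
    (hgen : closure {ρ0, ρ1, ρ2} = ⊤) : Nat.card G ≤ 12 * Nat.card Λ := by
  have := hρ.translationLattice_normal hgen
  set D := closure {ρ1, ρ2}
  have hρ1 : ρ1 ∈ D := subset_closure (by simp)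
  have hρ2 : ρ2 ∈ D := subset_closure (by simp)
  have htop : D ⊔ Λ = ⊤ := by
    rw [eq_top_iff, ← hgen, closure_le]
    simp only [Set.insert_subset_iff, Set.singleton_subset_iff, SetLike.mem_coe]
    refine ⟨?_, mem_sup_left hρ1, mem_sup_left hρ2⟩
    have hσ : (ρ1 * ρ2) ^ 2 * ρ1 ∈ D := mul_mem (pow_mem (mul_mem hρ1 hρ2) 2) hρ1
    have hρ0 : τ₁ * ((ρ1 * ρ2) ^ 2 * ρ1)⁻¹ ∈ D ⊔ Λ :=
      mul_mem (mem_sup_right (unitTranslationA_mem ρ0 ρ1 ρ2)) (mem_sup_left (inv_mem hσ))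
    rwa [unitTranslationA, mul_inv_cancel_right] at hρ0
  calc Nat.card G = Nat.card ↥(D ⊔ Λ) := by rw [htop, card_top]
    _ ≤ Nat.card D * Nat.card Λ := card_sup_le_of_le_normalizer le_normalizer_of_normal
    _ ≤ 12 * Nat.card Λ := Nat.mul_le_mul_right _
      (card_closure_pair_le_of_sq_eq_one hρ.sq1 hρ.sq2 (by norm_num) hρ.pow12)

theorem sq_pow_eq_one_of_pow_eq_one (hρ : IsCoxeter36 ρ0 ρ1 ρ2) {s : ℕ}
    (hmap : ((ρ2 * ρ1) ^ 2 * ρ0) ^ (2 * s) = 1) : ((ρ0 * (ρ1 * ρ2) ^ 2) ^ 2) ^ s = 1 := by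
  have hinv : (ρ0 * (ρ1 * ρ2) ^ 2)⁻¹ = (ρ2 * ρ1) ^ 2 * ρ0 := by
    simp only [mul_inv_rev, pow_two, mul_assoc, hρ.rewrite_rules]
  rw [← pow_mul, ← inv_inj, ← inv_pow, hinv, hmap, inv_one]

end IsCoxeter36

end

theorem stmt3_general (s : ℕ)
    (G : Type*) [Group G] [Finite G] (ρ0 ρ1 ρ2 : G)
    (hgen : Subgroup.closure {ρ0, ρ1, ρ2} = ⊤)
    (hr0 : ρ0 ^ 2 = 1) (hr1 : ρ1 ^ 2 = 1) (hr2 : ρ2 ^ 2 = 1)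
    (h01 : (ρ0 * ρ1) ^ 3 = 1) (h12 : (ρ1 * ρ2) ^ 6 = 1) (h02 : (ρ0 * ρ2) ^ 2 = 1)
    (hmap : ((ρ2 * ρ1) ^ 2 * ρ0) ^ (2 * s) = 1)
    (hG : Nat.card G = 36 * s ^ 2)
    (g h : G) (hgdef : g = (ρ0 * (ρ1 * ρ2) ^ 2) ^ 2) (hhdef : h = ρ0 * g * ρ0)
    (T : Subgroup G) (hT : T = Subgroup.closure {g, h})
    (X : Type*) [MulAction G X]
    (hfaith : ∀ a : G, (∀ x : X, a • x = x) → a = 1)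
    : ¬ (∀ x y : X, ∃ t ∈ T, t • x = y) := by
  intro hTtrans
  have hρ : IsCoxeter36 ρ0 ρ1 ρ2 := ⟨hr0, hr1, hr2, h01, h12, h02⟩
  have hs : 0 < s := Nat.pos_of_ne_zero fun hs => Nat.card_pos.ne' (by simpa [hs] using hG)
  have hΛ := hρ.translationLattice_normal hgen
  have hh : h = ρ0 * g * ρ0⁻¹ := by rw [hhdef, inv_eq_self_of_sq_eq_one hr0]
  have hg : g ∈ translationLattice ρ0 ρ1 ρ2 := by
    rw [hgdef, ← hρ.unitTranslationA_mul_unitTranslationB]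
    exact mul_mem (unitTranslationA_mem ρ0 ρ1 ρ2) (unitTranslationB_mem ρ0 ρ1 ρ2)
  have hTΛ : T ≤ translationLattice ρ0 ρ1 ρ2 := by
    rw [hT, closure_le, Set.insert_subset_iff, Set.singleton_subset_iff, hh]
    exact ⟨hg, hΛ.conj_mem g hg ρ0⟩
  have hΛT : translationLattice ρ0 ρ1 ρ2 ≤ centralizer T :=
    hρ.translationLattice_le_centralizer.trans (centralizer_le hTΛ)
  have : IsMulCommutative T := le_centralizer_iff_isMulCommutative.1 (hTΛ.trans hΛT)
  have : FaithfulSMul G X :=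
    ⟨fun h => mul_inv_eq_one.1 (hfaith _ fun x => by rw [mul_smul, h, smul_inv_smul])⟩
  have : MulAction.IsPretransitive T X :=
    ⟨fun x y => let ⟨t, ht, e⟩ := hTtrans x y; ⟨⟨t, ht⟩, e⟩⟩
  have hgs : g ^ s = 1 := hgdef ▸ hρ.sq_pow_eq_one_of_pow_eq_one hmap
  have hhs : h ^ s = 1 := by rw [hh, conj_pow, hgs, mul_one, mul_inv_cancel]
  have hgh : Commute g h := (hΛT hg h (hT ▸ subset_closure (by simp))).symm
  have hcardΛ := card_le_of_le (hΛT.trans (centralizer_le_of_isPretransitive X T))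
  have hcardT : Nat.card T ≤ s * s := hT ▸ card_closure_pair_le_of_commute hgh hs hgs hhs
  have : 36 * s ^ 2 ≤ 12 * (s * s) := hG ▸
    (hρ.card_le_twelve_mul_card_translationLattice hgen).trans
      (Nat.mul_le_mul_left 12 (hcardΛ.trans hcardT))
  nlinarith

theorem stmt3 (s : ℕ) (hs : 1 ≤ s)
    (G : Type*) [Group G] [Finite G] (ρ0 ρ1 ρ2 : G)
    (hgen : Subgroup.closure {ρ0, ρ1, ρ2} = ⊤)
    (hr0 : ρ0 ^ 2 = 1) (hr1 : ρ1 ^ 2 = 1) (hr2 : ρ2 ^ 2 = 1)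
    (h01 : (ρ0 * ρ1) ^ 3 = 1) (h12 : (ρ1 * ρ2) ^ 6 = 1) (h02 : (ρ0 * ρ2) ^ 2 = 1)
    (hmap : ((ρ2 * ρ1) ^ 2 * ρ0) ^ (2 * s) = 1)
    (hG : Nat.card G = 36 * s ^ 2)
    (g h : G) (hgdef : g = (ρ0 * (ρ1 * ρ2) ^ 2) ^ 2) (hhdef : h = ρ0 * g * ρ0)
    (T : Subgroup G) (hT : T = Subgroup.closure {g, h})
    (X : Type*) [Finite X] [MulAction G X]
    (hfaith : ∀ a : G, (∀ x : X, a • x = x) → a = 1)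
    (htrans : ∀ x y : X, ∃ a : G, a • x = y)
    : ¬ (∀ x y : X, ∃ t ∈ T, t • x = y) :=
  stmt3_general s G ρ0 ρ1 ρ2 hgen hr0 hr1 hr2 h01 h12 h02 hmap hG g h hgdef hhdef T hT X hfaith
end

section
/- Let s > 2 and let a, b be positive integers with s = lcm(a, b). Then the subgroup H = ⟨u^a, v^b⟩ of G is core-free and has index 8ab in G. -/
/-!
The translations `u` and `v` commute, and each `ρᵢ` conjugates them to `u^{±1}` or
`v^{±1}`, so `T = ⟨u, v⟩` is a normal abelian subgroup with `u^s = v^s = 1`, hence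
`|T| ≤ s²`. Modulo `T` we have `ρ₂ ≡ ρ₁ρ₀ρ₁`, so `G/T` is generated by two involutions whose
product has order dividing `4`, and `[G : T] ≤ 8`. As `|G| = 8s²`, both bounds are equalities:
`T ≅ (ℤ/s)²`, i.e. `u^i v^j = 1` only when `s ∣ i` and `s ∣ j`.

Consequently `H = ⟨u^a, v^b⟩ ≅ ℤ/(s/a) × ℤ/(s/b)`, so `[G : H] = 8s²/(s²/ab) = 8ab`. If
`u^{ai} v^{bj}` lies in the core of `H`, so does its conjugate `v^{ai} u^{bj}` by `ρ₁`;
comparing exponents gives `b ∣ ai` and `a ∣ bj`, so `s = lcm(a, b)` divides `ai` and `bj`, and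
the element is trivial.
-/

open Subgroup

section PowersModulo

variable {G : Type*} [Group G] {x y : G} {m n : ℕ}

theorem pow_val_intCast [NeZero m] (hx : x ^ m = 1) (i : ℤ) : x ^ (i : ZMod m).val = x ^ i := by
  rw [← zpow_natCast, ZMod.val_intCast, ← zpow_eq_zpow_emod' i hx]

theorem zpow_eq_one_of_natCast_dvd (hx : x ^ m = 1) {i : ℤ} (hi : (m : ℤ) ∣ i) : x ^ i = 1 :=
  orderOf_dvd_iff_zpow_eq_one.mp
    ((Int.natCast_dvd_natCast.mpr (orderOf_dvd_of_pow_eq_one hx)).trans hi)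

def pairPow (x y : G) (m n : ℕ) (p : ZMod m × ZMod n) : closure ({x, y} : Set G) :=
  ⟨x ^ p.1.val * y ^ p.2.val,
    mul_mem (pow_mem (subset_closure (by simp)) _) (pow_mem (subset_closure (by simp)) _)⟩

theorem coe_pairPow_intCast [NeZero m] [NeZero n] (hx : x ^ m = 1) (hy : y ^ n = 1) (i j : ℤ) :
    (pairPow x y m n (i, j) : G) = x ^ i * y ^ j := by
  simp [pairPow, pow_val_intCast hx, pow_val_intCast hy]

end PowersModulo

theorem Int.natCast_lcm_dvd {a b : ℕ} {c : ℤ} (ha : (a : ℤ) ∣ c) (hb : (b : ℤ) ∣ c) :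
    (Nat.lcm a b : ℤ) ∣ c := by
  rw [Int.natCast_dvd] at ha hb ⊢
  exact Nat.lcm_dvd ha hb

namespace Commute

variable {G : Type*} [Group G] {x y : G} {m n : ℕ}

theorem mem_closure_pair_iff (h : Commute x y) {g : G} :
    g ∈ closure {x, y} ↔ ∃ i j : ℤ, x ^ i * y ^ j = g := by
  have hnorm : zpowers x ≤ normalizer (zpowers y : Set G) := by
    rw [le_normalizer_iff]
    rintro _ ⟨i, rfl⟩ _ ⟨j, rfl⟩
    simp [(h.zpow_zpow i j).eq]
  rw [← Set.singleton_union, Subgroup.closure_union, ← zpowers_eq_closure,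
    ← zpowers_eq_closure, ← SetLike.mem_coe, coe_mul_of_left_le_normalizer_right _ _ hnorm]
  simp [Set.mem_mul, mem_zpowers_iff]

theorem zpow_mul_zpow_mul_inv (h : Commute x y) (i j k l : ℤ) :
    x ^ i * y ^ j * (x ^ k * y ^ l)⁻¹ = x ^ (i - k) * y ^ (j - l) :=
  calc x ^ i * y ^ j * (x ^ k * y ^ l)⁻¹ = x ^ i * (y ^ (j - l) * x ^ (-k)) := by group
    _ = x ^ i * (x ^ (-k) * y ^ (j - l)) := by rw [(h.zpow_zpow (-k) (j - l)).eq]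
    _ = x ^ (i - k) * y ^ (j - l) := by group

theorem pairPow_surjective [NeZero m] [NeZero n] (h : Commute x y) (hx : x ^ m = 1)
    (hy : y ^ n = 1) : Function.Surjective (pairPow x y m n) := by
  rintro ⟨g, hg⟩
  obtain ⟨i, j, rfl⟩ := h.mem_closure_pair_iff.mp hg
  exact ⟨(i, j), Subtype.ext (coe_pairPow_intCast hx hy i j)⟩

theorem card_closure_pair_le [NeZero m] [NeZero n] (h : Commute x y) (hx : x ^ m = 1)
    (hy : y ^ n = 1) : Nat.card (closure {x, y}) ≤ m * n :=
  (Nat.card_le_card_of_surjective _ (h.pairPow_surjective hx hy)).trans_eq (by simp)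

theorem card_closure_pair_eq_iff [NeZero m] [NeZero n] (h : Commute x y) (hx : x ^ m = 1)
    (hy : y ^ n = 1) :
    Nat.card (closure {x, y}) = m * n ↔
      ∀ i j : ℤ, x ^ i * y ^ j = 1 → (m : ℤ) ∣ i ∧ (n : ℤ) ∣ j := by
  have hsurj := h.pairPow_surjective hx hy
  have hcard : Nat.card (closure {x, y}) = m * n ↔ Function.Injective (pairPow x y m n) := by
    rw [show m * n = Nat.card (ZMod m × ZMod n) by simp, eq_comm]
    exact ⟨fun hc => ((Nat.bijective_iff_surjective_and_card _).mpr ⟨hsurj, hc⟩).1,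
      fun hinj => Nat.card_eq_of_bijective _ ⟨hinj, hsurj⟩⟩
  rw [hcard]
  constructor
  · intro hinj i j hij
    have := @hinj (i, j) 0
      (Subtype.ext (by rw [coe_pairPow_intCast hx hy, hij]; simp [pairPow]))
    simpa [Prod.ext_iff, ZMod.intCast_zmod_eq_zero_iff_dvd] using this
  · rintro hind ⟨p, q⟩ ⟨p', q'⟩ hpq
    rw [← ZMod.intCast_zmod_cast p, ← ZMod.intCast_zmod_cast q, ← ZMod.intCast_zmod_cast p',
      ← ZMod.intCast_zmod_cast q'] at hpq ⊢
    rw [Subtype.ext_iff, coe_pairPow_intCast hx hy, coe_pairPow_intCast hx hy,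
      ← mul_inv_eq_one, h.zpow_mul_zpow_mul_inv] at hpq
    have := hind _ _ hpq
    simpa only [Prod.mk.injEq, ZMod.intCast_eq_intCast_iff_dvd_sub, dvd_sub_comm] using this

theorem card_closure_pow_pow (h : Commute x y) {s a b : ℕ} [NeZero s] (hx : x ^ s = 1)
    (hy : y ^ s = 1) (hind : ∀ i j : ℤ, x ^ i * y ^ j = 1 → (s : ℤ) ∣ i ∧ (s : ℤ) ∣ j)
    (hm : s = a * m) (hn : s = b * n) : Nat.card (closure {x ^ a, y ^ b}) = m * n := by
  have hm0 : a * m ≠ 0 := hm ▸ NeZero.ne s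
  have hn0 : b * n ≠ 0 := hn ▸ NeZero.ne s
  have : NeZero m := ⟨right_ne_zero_of_mul hm0⟩
  have : NeZero n := ⟨right_ne_zero_of_mul hn0⟩
  have ha : (a : ℤ) ≠ 0 := Int.natCast_ne_zero.mpr (left_ne_zero_of_mul hm0)
  have hb : (b : ℤ) ≠ 0 := Int.natCast_ne_zero.mpr (left_ne_zero_of_mul hn0)
  refine ((h.pow_pow a b).card_closure_pair_eq_iff (by rw [← pow_mul, ← hm, hx])
    (by rw [← pow_mul, ← hn, hy])).mpr fun i j hij => ?_
  obtain ⟨hi, hj⟩ := hind (a * i) (b * j) (by simpa only [zpow_mul, zpow_natCast] using hij)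
  rw [hm, Nat.cast_mul] at hi
  rw [hn, Nat.cast_mul] at hj
  exact ⟨(mul_dvd_mul_iff_left ha).mp hi, (mul_dvd_mul_iff_left hb).mp hj⟩

theorem normalCore_closure_pow_pow_eq_bot (h : Commute x y) {s a b : ℕ} (hx : x ^ s = 1)
    (hy : y ^ s = 1) (hind : ∀ i j : ℤ, x ^ i * y ^ j = 1 → (s : ℤ) ∣ i ∧ (s : ℤ) ∣ j)
    (hlcm : s = Nat.lcm a b) {g : G} (hgx : g * x * g⁻¹ = y) (hgy : g * y * g⁻¹ = x) :
    (closure {x ^ a, y ^ b}).normalCore = ⊥ := by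
  rw [eq_bot_iff]
  intro z hz
  obtain ⟨i, j, rfl⟩ := (h.pow_pow a b).mem_closure_pair_iff.mp (normalCore_le _ hz)
  obtain ⟨k, l, hkl⟩ := (h.pow_pow a b).mem_closure_pair_iff.mp
    (normalCore_le _ ((normalCore_normal _).conj_mem _ hz g))
  have hconj : g * ((x ^ a) ^ i * (y ^ b) ^ j) * g⁻¹ = (x ^ b) ^ j * (y ^ a) ^ i := by
    rw [← MulAut.conj_apply, map_mul, map_zpow, map_zpow, map_pow, map_pow, MulAut.conj_apply,
      MulAut.conj_apply, hgx, hgy, ((h.pow_pow b a).zpow_zpow j i).eq]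
  have hexp (w : G) (c : ℕ) (t : ℤ) : (w ^ c) ^ t = w ^ ((c : ℤ) * t) := by
    rw [zpow_mul, zpow_natCast]
  rw [hconj] at hkl
  simp only [hexp] at hkl ⊢
  obtain ⟨hbj, hai⟩ :=
    hind _ _ ((h.zpow_mul_zpow_mul_inv _ _ _ _).symm.trans (mul_inv_eq_one.mpr hkl))
  have has : (a : ℤ) ∣ s := Int.natCast_dvd_natCast.mpr (hlcm ▸ Nat.dvd_lcm_left a b)
  have hbs : (b : ℤ) ∣ s := Int.natCast_dvd_natCast.mpr (hlcm ▸ Nat.dvd_lcm_right a b)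
  have hsai : (s : ℤ) ∣ a * i := hlcm ▸ Int.natCast_lcm_dvd (dvd_mul_right _ _)
    ((dvd_sub_right (dvd_mul_right _ l)).mp (hbs.trans hai))
  have hsbj : (s : ℤ) ∣ b * j := hlcm ▸ Int.natCast_lcm_dvd
    ((dvd_sub_right (dvd_mul_right _ k)).mp (has.trans hbj)) (dvd_mul_right _ _)
  rw [mem_bot, zpow_eq_one_of_natCast_dvd hx hsai, zpow_eq_one_of_natCast_dvd hy hsbj,
    one_mul]

end Commute

section Involutions

variable {G : Type*} [Group G] {a b : G}

theorem inv_eq_self_of_sq_eq_one_s5 (ha : a ^ 2 = 1) : a⁻¹ = a :=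
  inv_eq_of_mul_eq_one_left (by rwa [← sq])

theorem mul_mul_cancel_of_sq_eq_one (ha : a ^ 2 = 1) (x : G) : a * (a * x) = x := by
  rw [← mul_assoc, ← sq, ha, one_mul]

theorem mul_comm_of_involutions (ha : a ^ 2 = 1) (hb : b ^ 2 = 1) (hab : (a * b) ^ 2 = 1) :
    b * a = a * b := by
  rw [← inv_eq_self_of_sq_eq_one_s5 hab, mul_inv_rev, inv_eq_self_of_sq_eq_one_s5 ha,
    inv_eq_self_of_sq_eq_one_s5 hb]

theorem braid_of_involutions (ha : a ^ 2 = 1) (hb : b ^ 2 = 1) (hab : (a * b) ^ 4 = 1) :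
    b * (a * (b * a)) = a * (b * (a * b)) := by
  have h2 : ((a * b) ^ 2) ^ 2 = 1 := by rw [← pow_mul, hab]
  have := inv_eq_self_of_sq_eq_one_s5 h2
  simp only [sq, mul_inv_rev, inv_eq_self_of_sq_eq_one_s5 ha, inv_eq_self_of_sq_eq_one_s5 hb,
    mul_assoc] at this
  exact this

theorem exists_zpow_of_mem_closure_involutions (ha : a ^ 2 = 1) (hb : b ^ 2 = 1) {g : G}
    (hg : g ∈ closure {a, b}) : ∃ k : ℤ, g = (a * b) ^ k ∨ g = (a * b) ^ k * a := by
  have ha' := inv_eq_self_of_sq_eq_one_s5 ha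
  have hb' := inv_eq_self_of_sq_eq_one_s5 hb
  have hconj : a * (a * b) * a⁻¹ = (a * b)⁻¹ := by
    rw [mul_inv_rev, ha', hb', ← mul_assoc, ← sq, ha, one_mul]
  have hflipA (k : ℤ) : a * (a * b) ^ k = (a * b) ^ (-k) * a :=
    calc a * (a * b) ^ k = (a * (a * b) * a⁻¹) ^ k * a := by rw [conj_zpow]; group
      _ = (a * b) ^ (-k) * a := by rw [hconj, inv_zpow']
  have hflipB (k : ℤ) : b * (a * b) ^ k = (a * b) ^ (-(k + 1)) * a := by
    rw [← hflipA, add_comm, zpow_one_add, ← mul_assoc, ← mul_assoc, ← sq, ha, one_mul]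
  have step : ∀ z ∈ ({a, b} : Set G), ∀ w : G,
      (∃ k : ℤ, w = (a * b) ^ k ∨ w = (a * b) ^ k * a) →
        ∃ k : ℤ, z * w = (a * b) ^ k ∨ z * w = (a * b) ^ k * a := by
    rintro z hz w ⟨k, rfl | rfl⟩ <;> obtain rfl | rfl := Set.mem_insert_iff.mp hz
    · exact ⟨-k, Or.inr (hflipA k)⟩
    · exact ⟨_, Or.inr (hflipB k)⟩
    · exact ⟨-k, Or.inl (by rw [← mul_assoc, hflipA, mul_assoc, ← sq, ha, mul_one])⟩
    · exact ⟨_, Or.inl (by rw [← mul_assoc, hflipB, mul_assoc, ← sq, ha, mul_one])⟩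
  induction hg using closure_induction_left with
  | one => exact ⟨0, Or.inl (by simp)⟩
  | mul_left z hz w _ ih => exact step z hz w ih
  | inv_mul_cancel z hz w _ ih =>
    obtain rfl | rfl := Set.mem_insert_iff.mp hz
    · rw [ha']; exact step _ hz w ih
    · rw [hb']; exact step _ hz w ih

theorem nat_card_le_two_mul_orderOf_of_involutions [Finite G] (ha : a ^ 2 = 1)
    (hb : b ^ 2 = 1) (hgen : closure {a, b} = ⊤) : Nat.card G ≤ 2 * orderOf (a * b) := by
  have hsurj : Function.Surjective fun p : zpowers (a * b) × Bool =>
      (p.1 : G) * bif p.2 then a else 1 := by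
    intro g
    obtain ⟨k, rfl | rfl⟩ := exists_zpow_of_mem_closure_involutions ha hb (hgen ▸ mem_top g)
    · exact ⟨(⟨_, zpow_mem_zpowers _ k⟩, false), by simp⟩
    · exact ⟨(⟨_, zpow_mem_zpowers _ k⟩, true), by simp⟩
  calc Nat.card G ≤ Nat.card (zpowers (a * b) × Bool) :=
        Nat.card_le_card_of_surjective _ hsurj
    _ = 2 * orderOf (a * b) := by simp [Nat.card_prod, Nat.card_zpowers, mul_comm]

end Involutions

theorem Subgroup.normal_closure_of_conj_mem {G : Type*} [Group G] [Finite G] {s k : Set G}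
    (hgen : closure s = ⊤) (hconj : ∀ g ∈ s, ∀ x ∈ k, g * x * g⁻¹ ∈ closure k) :
    (closure k).Normal := by
  rw [← normalizer_eq_top_iff, eq_top_iff, ← hgen, closure_le]
  intro g hg
  rw [SetLike.mem_coe, mem_normalizer_iff_map_conj_eq]
  refine eq_of_le_of_card_ge ?_ (card_map_of_injective (MulAut.conj g).injective).ge
  rw [MonoidHom.map_closure, closure_le]
  rintro _ ⟨x, hx, rfl⟩
  exact hconj g hg x hx

structure IsCoxeter44 {G : Type*} [Group G] (ρ0 ρ1 ρ2 : G) : Prop where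
  sq_zero : ρ0 ^ 2 = 1
  sq_one : ρ1 ^ 2 = 1
  sq_two : ρ2 ^ 2 = 1
  pow_zero_one : (ρ0 * ρ1) ^ 4 = 1
  pow_one_two : (ρ1 * ρ2) ^ 4 = 1
  pow_zero_two : (ρ0 * ρ2) ^ 2 = 1

namespace IsCoxeter44

variable {G : Type*} [Group G] {ρ0 ρ1 ρ2 u v : G}

theorem conj_translations (h : IsCoxeter44 ρ0 ρ1 ρ2) (hu : u = ρ0 * ρ1 * ρ2 * ρ1)
    (hv : v = ρ1 * u * ρ1) :
    (ρ0 * u * ρ0⁻¹ = u⁻¹ ∧ ρ0 * v * ρ0⁻¹ = v) ∧ (ρ1 * u * ρ1⁻¹ = v ∧ ρ1 * v * ρ1⁻¹ = u) ∧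
      (ρ2 * u * ρ2⁻¹ = u ∧ ρ2 * v * ρ2⁻¹ = v⁻¹) := by
  have c02 := mul_comm_of_involutions h.sq_zero h.sq_two h.pow_zero_two
  have b01 := braid_of_involutions h.sq_zero h.sq_one h.pow_zero_one
  have b12 := braid_of_involutions h.sq_one h.sq_two h.pow_one_two
  have c02' (x : G) : ρ2 * (ρ0 * x) = ρ0 * (ρ2 * x) := by rw [← mul_assoc, c02, mul_assoc]
  have b01' (x : G) : ρ1 * (ρ0 * (ρ1 * (ρ0 * x))) = ρ0 * (ρ1 * (ρ0 * (ρ1 * x))) := by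
    simpa only [mul_assoc] using congrArg (· * x) b01
  subst hv hu
  simp only [mul_inv_rev, inv_eq_self_of_sq_eq_one_s5 h.sq_zero,
    inv_eq_self_of_sq_eq_one_s5 h.sq_one, inv_eq_self_of_sq_eq_one_s5 h.sq_two, mul_assoc,
    mul_mul_cancel_of_sq_eq_one h.sq_zero, mul_mul_cancel_of_sq_eq_one h.sq_one, ← sq,
    h.sq_one, h.sq_two, mul_one, c02, c02', b01', b12, and_self]

theorem commute_translations (h : IsCoxeter44 ρ0 ρ1 ρ2) (hu : u = ρ0 * ρ1 * ρ2 * ρ1)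
    (hv : v = ρ1 * u * ρ1) : Commute u v := by
  obtain ⟨⟨-, c0v⟩, ⟨c1u, c1v⟩, ⟨c2u, -⟩⟩ := h.conj_translations hu hv
  -- conjugating by `u = ρ0 ρ1 ρ2 ρ1` sends `v` to `u`, `u`, `v`, `v` in turn
  have : u * v * u⁻¹ = v :=
    calc u * v * u⁻¹ = ρ0 * (ρ1 * (ρ2 * (ρ1 * v * ρ1⁻¹) * ρ2⁻¹) * ρ1⁻¹) * ρ0⁻¹ := by
          conv_lhs => rw [hu]
          group
      _ = v := by rw [c1v, c2u, c1u, c0v]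
  exact mul_inv_eq_iff_eq_mul.mp this

theorem normal_closure_translations [Finite G] (h : IsCoxeter44 ρ0 ρ1 ρ2)
    (hgen : closure {ρ0, ρ1, ρ2} = ⊤) (hu : u = ρ0 * ρ1 * ρ2 * ρ1) (hv : v = ρ1 * u * ρ1) :
    (closure {u, v}).Normal := by
  obtain ⟨⟨c0u, c0v⟩, ⟨c1u, c1v⟩, ⟨c2u, c2v⟩⟩ := h.conj_translations hu hv
  have huT : u ∈ closure {u, v} := subset_closure (by simp)
  have hvT : v ∈ closure {u, v} := subset_closure (by simp)
  refine normal_closure_of_conj_mem hgen fun g hg x hx => ?_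
  rcases hg with hg | hg | hg <;> rcases hx with hx | hx <;> subst g x <;>
    simp only [c0u, c0v, c1u, c1v, c2u, c2v, inv_mem_iff, huT, hvT]

theorem closure_mk_eq_top (h : IsCoxeter44 ρ0 ρ1 ρ2) (hgen : closure {ρ0, ρ1, ρ2} = ⊤)
    {N : Subgroup G} [N.Normal] (hN : ρ0 * ρ1 * ρ2 * ρ1 ∈ N) :
    closure {(ρ0 : G ⧸ N), (ρ1 : G ⧸ N)} = ⊤ := by
  have h0 : (ρ0 : G ⧸ N) ∈ closure {(ρ0 : G ⧸ N), (ρ1 : G ⧸ N)} := subset_closure (by simp)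
  have h1 : (ρ1 : G ⧸ N) ∈ closure {(ρ0 : G ⧸ N), (ρ1 : G ⧸ N)} := subset_closure (by simp)
  have hρ2 : ρ2 = ρ1 * ρ0 * (ρ0 * ρ1 * ρ2 * ρ1) * ρ1 := by
    simp only [mul_assoc, mul_mul_cancel_of_sq_eq_one h.sq_zero,
      mul_mul_cancel_of_sq_eq_one h.sq_one, ← sq, h.sq_one, mul_one]
  have hmap : (closure {ρ0, ρ1, ρ2}).map (QuotientGroup.mk' N) = ⊤ := by
    rw [hgen, ← MonoidHom.range_eq_map, QuotientGroup.range_mk']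
  simp only [MonoidHom.map_closure, Set.image_insert_eq, Set.image_singleton,
    QuotientGroup.coe_mk'] at hmap
  rw [eq_top_iff, ← hmap, closure_le]
  rintro _ (rfl | rfl | rfl)
  · exact h0
  · exact h1
  · rw [hρ2, QuotientGroup.mk_mul, QuotientGroup.mk_mul, QuotientGroup.mk_mul,
      (QuotientGroup.eq_one_iff _).mpr hN, mul_one]
    exact mul_mem (mul_mem h1 h0) h1

theorem index_le_eight [Finite G] (h : IsCoxeter44 ρ0 ρ1 ρ2) (hgen : closure {ρ0, ρ1, ρ2} = ⊤)
    {N : Subgroup G} [N.Normal] (hN : ρ0 * ρ1 * ρ2 * ρ1 ∈ N) : N.index ≤ 8 := by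
  open QuotientGroup in
  have hmk {g : G} {k : ℕ} (hg : g ^ k = 1) : (g : G ⧸ N) ^ k = 1 := by rw [← mk_pow, hg, mk_one]
  rw [index_eq_card]
  calc Nat.card (G ⧸ N) ≤ 2 * orderOf ((ρ0 : G ⧸ N) * ρ1) :=
        nat_card_le_two_mul_orderOf_of_involutions (hmk h.sq_zero) (hmk h.sq_one)
          (h.closure_mk_eq_top hgen hN)
    _ ≤ 2 * 4 := by
        gcongr
        exact orderOf_le_of_pow_eq_one (by norm_num) (hmk h.pow_zero_one)

end IsCoxeter44

theorem stmt5_general (s a b : ℕ)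
    (hlcm : s = Nat.lcm a b)
    (G : Type*) [Group G] [Finite G] (ρ0 ρ1 ρ2 : G)
    (hgen : Subgroup.closure {ρ0, ρ1, ρ2} = ⊤)
    (hr0 : ρ0 ^ 2 = 1) (hr1 : ρ1 ^ 2 = 1) (hr2 : ρ2 ^ 2 = 1)
    (h01 : (ρ0 * ρ1) ^ 4 = 1) (h12 : (ρ1 * ρ2) ^ 4 = 1) (h02 : (ρ0 * ρ2) ^ 2 = 1)
    (hmap : (ρ0 * ρ1 * ρ2 * ρ1) ^ s = 1)
    (hG : Nat.card G = 8 * s ^ 2)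
    (u v : G) (hu : u = ρ0 * ρ1 * ρ2 * ρ1) (hv : v = ρ1 * u * ρ1)
    : (Subgroup.closure {u ^ a, v ^ b}).normalCore = ⊥ ∧
      (Subgroup.closure {u ^ a, v ^ b}).index = 8 * a * b := by
  have hρ : IsCoxeter44 ρ0 ρ1 ρ2 := ⟨hr0, hr1, hr2, h01, h12, h02⟩
  have : NeZero s := ⟨by rintro rfl; simp [Nat.card_pos.ne'] at hG⟩
  have huv := hρ.commute_translations hu hv
  obtain ⟨-, ⟨c1u, c1v⟩, -⟩ := hρ.conj_translations hu hv
  have hus : u ^ s = 1 := hu ▸ hmap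
  have hvs : v ^ s = 1 := by rw [← c1u, conj_pow, hus, mul_one, mul_inv_cancel]
  have hT : Nat.card (closure {u, v}) = s * s := by
    have := hρ.normal_closure_translations hgen hu hv
    have hindex := hρ.index_le_eight hgen (N := closure {u, v})
      (by rw [← hu]; exact subset_closure (by simp))
    have hmul := (closure {u, v}).card_mul_index
    have hle := huv.card_closure_pair_le hus hvs
    nlinarith
  have hind := (huv.card_closure_pair_eq_iff hus hvs).mp hT
  refine ⟨huv.normalCore_closure_pow_pow_eq_bot hus hvs hind hlcm c1u c1v, ?_⟩
  obtain ⟨m, hm⟩ : a ∣ s := hlcm ▸ Nat.dvd_lcm_left a b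
  obtain ⟨n, hn⟩ : b ∣ s := hlcm ▸ Nat.dvd_lcm_right a b
  have hH := (closure {u ^ a, v ^ b}).card_mul_index
  rw [huv.card_closure_pow_pow hus hvs hind hm hn, hG] at hH
  have hmn : m * n ≠ 0 := mul_ne_zero (right_ne_zero_of_mul (hm ▸ NeZero.ne s))
    (right_ne_zero_of_mul (hn ▸ NeZero.ne s))
  refine Nat.eq_of_mul_eq_mul_left (Nat.pos_of_ne_zero hmn) ?_
  rw [hH, sq]
  nth_rw 1 [hm]
  rw [hn]
  ring

theorem stmt5 (s a b : ℕ) (hs : 2 < s) (ha : 0 < a) (hb : 0 < b)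
    (hlcm : s = Nat.lcm a b)
    (G : Type*) [Group G] [Finite G] (ρ0 ρ1 ρ2 : G)
    (hgen : Subgroup.closure {ρ0, ρ1, ρ2} = ⊤)
    (hr0 : ρ0 ^ 2 = 1) (hr1 : ρ1 ^ 2 = 1) (hr2 : ρ2 ^ 2 = 1)
    (h01 : (ρ0 * ρ1) ^ 4 = 1) (h12 : (ρ1 * ρ2) ^ 4 = 1) (h02 : (ρ0 * ρ2) ^ 2 = 1)
    (hmap : (ρ0 * ρ1 * ρ2 * ρ1) ^ s = 1)
    (hG : Nat.card G = 8 * s ^ 2)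
    (u v : G) (hu : u = ρ0 * ρ1 * ρ2 * ρ1) (hv : v = ρ1 * u * ρ1)
    : (Subgroup.closure {u ^ a, v ^ b}).normalCore = ⊥ ∧
      (Subgroup.closure {u ^ a, v ^ b}).index = 8 * a * b :=
  stmt5_general s a b hlcm G ρ0 ρ1 ρ2 hgen hr0 hr1 hr2 h01 h12 h02 hmap hG u v hu hv
end

section
/- Let s > 2 and let a, b be positive integers with s = lcm(a, b). Then the subgroup H = ⟨u^a, v^b, ρ0⟩ of G is core-free and has index 4ab in G. -/
open Pointwise

namespace Stmt6Aux
variable {G : Type*} [Group G]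

lemma inv_self' {x : G} (h : x * x = 1) : x⁻¹ = x := inv_eq_of_mul_eq_one_right h

lemma pushg0 {r y y' : G} (h : r * y * r⁻¹ = y') (m : ℕ) :
    r * y ^ m = y' ^ m * r := by
  have h1 : r * y ^ m * r⁻¹ = y' ^ m := by rw [← conj_pow, h]
  calc r * y ^ m = (r * y ^ m * r⁻¹) * r := by group
  _ = y' ^ m * r := by rw [h1]

lemma push {r y y' : G} (hr : r * r = 1) (h : r * y * r = y') (m : ℕ) :
    r * y ^ m = y' ^ m * r := by
  have h' : r * y * r⁻¹ = y' := by rw [inv_self' hr]; exact h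
  exact pushg0 h' m

lemma pushc {r y y' : G} (hr : r * r = 1) (h : r * y * r = y') (m : ℕ) (g : G) :
    r * (y ^ m * g) = y' ^ m * (r * g) := by
  rw [← mul_assoc, push hr h, mul_assoc]

lemma pushgc {r y y' : G} (h : r * y * r⁻¹ = y') (m : ℕ) (g : G) :
    r * (y ^ m * g) = y' ^ m * (r * g) := by
  rw [← mul_assoc, pushg0 h, mul_assoc]

variable {n : ℕ} [NeZero n]

omit [NeZero n] in
lemma pv_natCast {x : G} (hx : x ^ n = 1) (m : ℕ) : x ^ ((m : ZMod n)).val = x ^ m := by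
  rw [ZMod.val_natCast]
  exact (pow_eq_pow_mod m hx).symm

lemma pv_add {x : G} (hx : x ^ n = 1) (i j : ZMod n) :
    x ^ (i + j).val = x ^ i.val * x ^ j.val := by
  have h1 : ((i.val + j.val : ℕ) : ZMod n) = i + j := by
    push_cast
    rw [ZMod.natCast_rightInverse i, ZMod.natCast_rightInverse j]
  rw [← h1, pv_natCast hx, pow_add]

lemma pv_zero {x : G} : x ^ ((0 : ZMod n)).val = 1 := by
  rw [ZMod.val_zero, pow_zero]

lemma pv_neg {x : G} (hx : x ^ n = 1) (i : ZMod n) :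
    x ^ ((-i : ZMod n)).val = (x ^ i.val)⁻¹ := by
  have h1 : x ^ ((-i + i : ZMod n)).val = 1 := by rw [neg_add_cancel]; exact pv_zero
  rw [pv_add hx] at h1
  exact eq_inv_of_mul_eq_one_left h1

/-- the normal-form map -/
def F {s : ℕ} (u v w r : G) (p : ZMod s × ZMod s × ZMod 4 × ZMod 2) : G :=
  u ^ p.1.val * v ^ p.2.1.val * w ^ p.2.2.1.val * r ^ p.2.2.2.val

section Rel
variable {ρ0 ρ1 ρ2 u v : G}
  (hu : u = ρ0 * ρ1 * ρ2 * ρ1) (hv : v = ρ1 * u * ρ1)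
  (m0 : ρ0 * ρ0 = 1) (m1 : ρ1 * ρ1 = 1) (m2 : ρ2 * ρ2 = 1)
  (h01 : (ρ0 * ρ1) ^ 4 = 1) (h12 : (ρ1 * ρ2) ^ 4 = 1) (h02 : (ρ0 * ρ2) ^ 2 = 1)

include m0 m2 h02 in
lemma E02 : ρ0 * ρ2 = ρ2 * ρ0 := by
  have h : (ρ0 * ρ2) * (ρ0 * ρ2) = 1 := by rw [← pow_two]; exact h02
  have h2 := inv_self' h
  rw [mul_inv_rev, inv_self' m0, inv_self' m2] at h2
  exact h2.symm

include m0 m1 h01 in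
lemma B01 : ρ0 * ρ1 * ρ0 * ρ1 = ρ1 * ρ0 * ρ1 * ρ0 := by
  have h : ((ρ0*ρ1)^2) * ((ρ0*ρ1)^2) = 1 := by rw [← pow_add]; exact h01
  have h2 := inv_self' h
  have h3 : ((ρ0*ρ1)^2)⁻¹ = (ρ1 * ρ0)^2 := by
    rw [← inv_pow, mul_inv_rev, inv_self' m0, inv_self' m1]
  rw [h3] at h2
  have e1 : (ρ0*ρ1)^2 = ρ0 * ρ1 * ρ0 * ρ1 := by rw [pow_two]; group
  have e2 : (ρ1*ρ0)^2 = ρ1 * ρ0 * ρ1 * ρ0 := by rw [pow_two]; group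
  rw [e1, e2] at h2
  exact h2.symm

include hu hv m1 in
lemma HV' : v = ρ1 * ρ0 * ρ1 * ρ2 := by
  rw [hv, hu]
  calc ρ1 * (ρ0 * ρ1 * ρ2 * ρ1) * ρ1 = ρ1 * ρ0 * ρ1 * ρ2 * (ρ1 * ρ1) := by group
  _ = ρ1 * ρ0 * ρ1 * ρ2 := by rw [m1, mul_one]

include hu m0 m1 m2 in
lemma CU0 : ρ0 * u * ρ0 = u⁻¹ := by
  rw [hu]
  calc ρ0 * (ρ0 * ρ1 * ρ2 * ρ1) * ρ0 = (ρ0 * ρ0) * (ρ1 * ρ2 * ρ1 * ρ0) := by group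
  _ = ρ1 * ρ2 * ρ1 * ρ0 := by rw [m0, one_mul]
  _ = (ρ0 * ρ1 * ρ2 * ρ1)⁻¹ := by
      simp [mul_inv_rev, inv_self' m0, inv_self' m1, inv_self' m2, mul_assoc]

include hu m0 m1 m2 h12 h02 in
lemma CU2 : ρ2 * u * ρ2 = u := by
  have e02 := E02 m0 m2 h02
  have b12 := B01 m1 m2 h12
  rw [hu]
  calc ρ2 * (ρ0 * ρ1 * ρ2 * ρ1) * ρ2
      = (ρ2 * ρ0) * (ρ1 * ρ2 * ρ1 * ρ2) := by group
    _ = (ρ0 * ρ2) * (ρ2 * ρ1 * ρ2 * ρ1) := by rw [e02, b12]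
    _ = ρ0 * (ρ2 * ρ2) * (ρ1 * ρ2 * ρ1) := by group
    _ = ρ0 * ρ1 * ρ2 * ρ1 := by rw [m2, mul_one]; group

include hu hv m0 m1 m2 h01 h02 in
lemma CV0 : ρ0 * v * ρ0 = v := by
  have e02 := E02 m0 m2 h02
  have b01 := B01 m0 m1 h01
  rw [HV' hu hv m1]
  calc ρ0 * (ρ1 * ρ0 * ρ1 * ρ2) * ρ0
      = (ρ0 * ρ1 * ρ0 * ρ1) * (ρ2 * ρ0) := by group
    _ = (ρ1 * ρ0 * ρ1 * ρ0) * (ρ0 * ρ2) := by rw [e02, b01]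
    _ = ρ1 * ρ0 * ρ1 * (ρ0 * ρ0) * ρ2 := by group
    _ = ρ1 * ρ0 * ρ1 * ρ2 := by rw [m0, mul_one]

include hu hv m0 m1 m2 in
lemma CV2 : ρ2 * v * ρ2 = v⁻¹ := by
  rw [HV' hu hv m1]
  calc ρ2 * (ρ1 * ρ0 * ρ1 * ρ2) * ρ2
      = ρ2 * ρ1 * ρ0 * ρ1 * (ρ2 * ρ2) := by group
    _ = ρ2 * ρ1 * ρ0 * ρ1 := by rw [m2, mul_one]
    _ = (ρ1 * ρ0 * ρ1 * ρ2)⁻¹ := by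
      simp [mul_inv_rev, inv_self' m0, inv_self' m1, inv_self' m2, mul_assoc]

include hv m1 in
lemma CV1 : ρ1 * v * ρ1 = u := by
  rw [hv]
  calc ρ1 * (ρ1 * u * ρ1) * ρ1 = (ρ1 * ρ1) * u * (ρ1 * ρ1) := by group
  _ = u := by rw [m1]; group

include m1 m2 in
lemma CW1 : ρ1 * (ρ1 * ρ2) * ρ1 = (ρ1 * ρ2)⁻¹ := by
  calc ρ1 * (ρ1 * ρ2) * ρ1 = (ρ1 * ρ1) * (ρ2 * ρ1) := by group
  _ = ρ2 * ρ1 := by rw [m1, one_mul]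
  _ = (ρ1 * ρ2)⁻¹ := by rw [mul_inv_rev, inv_self' m1, inv_self' m2]

include m1 m2 in
lemma CW2 : ρ2 * (ρ1 * ρ2) * ρ2 = (ρ1 * ρ2)⁻¹ := by
  calc ρ2 * (ρ1 * ρ2) * ρ2 = ρ2 * ρ1 * (ρ2 * ρ2) := by group
  _ = ρ2 * ρ1 := by rw [m2, mul_one]
  _ = (ρ1 * ρ2)⁻¹ := by rw [mul_inv_rev, inv_self' m1, inv_self' m2]

include hu hv m0 m1 m2 h12 h02 in
lemma CWU : (ρ1 * ρ2) * u * (ρ1 * ρ2)⁻¹ = v := by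
  rw [mul_inv_rev, inv_self' m1, inv_self' m2, hv]
  have h := CU2 hu m0 m1 m2 h12 h02
  calc ρ1 * ρ2 * u * (ρ2 * ρ1) = ρ1 * (ρ2 * u * ρ2) * ρ1 := by group
  _ = ρ1 * u * ρ1 := by rw [h]

include hu hv m0 m1 m2 in
lemma CWV : (ρ1 * ρ2) * v * (ρ1 * ρ2)⁻¹ = u⁻¹ := by
  rw [mul_inv_rev, inv_self' m1, inv_self' m2]
  have h := CV2 hu hv m0 m1 m2
  calc ρ1 * ρ2 * v * (ρ2 * ρ1) = ρ1 * (ρ2 * v * ρ2) * ρ1 := by group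
  _ = ρ1 * v⁻¹ * ρ1 := by rw [h]
  _ = (ρ1 * v * ρ1)⁻¹ := by simp [mul_inv_rev, inv_self' m1, mul_assoc]
  _ = u⁻¹ := by rw [CV1 hv m1]

include hu m1 m2 in
lemma E0 : ρ0 = u * (ρ1 * ρ2) * ρ1 := by
  have h : (ρ0 * ρ1 * ρ2 * ρ1) * (ρ1 * ρ2) * ρ1 = ρ0 := by
    calc (ρ0 * ρ1 * ρ2 * ρ1) * (ρ1 * ρ2) * ρ1
        = ρ0 * ρ1 * ρ2 * (ρ1 * ρ1) * (ρ2 * ρ1) := by group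
      _ = ρ0 * ρ1 * (ρ2 * ρ2) * ρ1 := by rw [m1]; group
      _ = ρ0 * (ρ1 * ρ1) := by rw [m2]; group
      _ = ρ0 := by rw [m1, mul_one]
  rw [hu]
  exact h.symm

include hu hv m0 m1 m2 h01 h12 h02 in
lemma UVcomm : u * v = v * u := by
  have e02 := E02 m0 m2 h02
  have b01 := B01 m0 m1 h01
  have b12 := B01 m1 m2 h12
  have hv' := HV' hu hv m1
  rw [hu, hv']
  calc (ρ0 * ρ1 * ρ2 * ρ1) * (ρ1 * ρ0 * ρ1 * ρ2)
      = ρ0 * ρ1 * ρ2 * (ρ1 * ρ1) * ρ0 * ρ1 * ρ2 := by group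
    _ = ρ0 * ρ1 * (ρ2 * ρ0) * ρ1 * ρ2 := by rw [m1]; group
    _ = ρ0 * ρ1 * ρ0 * (ρ2 * ρ1 * ρ2) := by rw [← e02]; group
    _ = (ρ1 * ρ0 * ρ1 * ρ2) * (ρ0 * ρ1 * ρ2 * ρ1) := by
        have h : (ρ1 * ρ0 * ρ1 * ρ2) * (ρ0 * ρ1 * ρ2 * ρ1) = ρ0 * ρ1 * ρ0 * (ρ2 * ρ1 * ρ2) := by
          calc (ρ1 * ρ0 * ρ1 * ρ2) * (ρ0 * ρ1 * ρ2 * ρ1)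
              = ρ1 * ρ0 * ρ1 * (ρ2 * ρ0) * (ρ1 * ρ2 * ρ1) := by group
            _ = (ρ1 * ρ0 * ρ1 * ρ0) * (ρ2 * ρ1 * ρ2 * ρ1) := by rw [← e02]; group
            _ = (ρ0 * ρ1 * ρ0 * ρ1) * (ρ1 * ρ2 * ρ1 * ρ2) := by rw [b01, b12]
            _ = ρ0 * ρ1 * ρ0 * (ρ1 * ρ1) * (ρ2 * ρ1 * ρ2) := by group
            _ = ρ0 * ρ1 * ρ0 * (ρ2 * ρ1 * ρ2) := by rw [m1, mul_one]
        exact h.symm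

end Rel
end Stmt6Aux

open Stmt6Aux

theorem stmt6 (s a b : ℕ) (hs : 2 < s) (ha : 0 < a) (hb : 0 < b)
    (hlcm : s = Nat.lcm a b)
    (G : Type*) [Group G] [Finite G] (ρ0 ρ1 ρ2 : G)
    (hgen : Subgroup.closure {ρ0, ρ1, ρ2} = ⊤)
    (hr0 : ρ0 ^ 2 = 1) (hr1 : ρ1 ^ 2 = 1) (hr2 : ρ2 ^ 2 = 1)
    (h01 : (ρ0 * ρ1) ^ 4 = 1) (h12 : (ρ1 * ρ2) ^ 4 = 1) (h02 : (ρ0 * ρ2) ^ 2 = 1)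
    (hmap : (ρ0 * ρ1 * ρ2 * ρ1) ^ s = 1)
    (hG : Nat.card G = 8 * s ^ 2)
    (u v : G) (hu : u = ρ0 * ρ1 * ρ2 * ρ1) (hv : v = ρ1 * u * ρ1)
    : (Subgroup.closure {u ^ a, v ^ b, ρ0}).normalCore = ⊥ ∧
      (Subgroup.closure {u ^ a, v ^ b, ρ0}).index = 4 * a * b := by
  haveI : NeZero s := ⟨by omega⟩
  haveI := Fintype.ofFinite G
  have has : a ∣ s := hlcm ▸ Nat.dvd_lcm_left a b
  have hbs : b ∣ s := hlcm ▸ Nat.dvd_lcm_right a b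
  have m0 : ρ0 * ρ0 = 1 := by rw [← pow_two]; exact hr0
  have m1 : ρ1 * ρ1 = 1 := by rw [← pow_two]; exact hr1
  have m2 : ρ2 * ρ2 = 1 := by rw [← pow_two]; exact hr2
  set w : G := ρ1 * ρ2 with hw
  have hw4 : w ^ 4 = 1 := h12
  have hus : u ^ s = 1 := by rw [hu]; exact hmap
  have cu0 := CU0 hu m0 m1 m2
  have cu1 : ρ1 * u * ρ1 = v := hv.symm
  have cu2 := CU2 hu m0 m1 m2 h12 h02
  have cv0 := CV0 hu hv m0 m1 m2 h01 h02
  have cv1 := CV1 hv m1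
  have cv2 := CV2 hu hv m0 m1 m2
  have cw1 := CW1 (ρ1 := ρ1) (ρ2 := ρ2) m1 m2
  have cw2 := CW2 (ρ1 := ρ1) (ρ2 := ρ2) m1 m2
  have cwu := CWU hu hv m0 m1 m2 h12 h02
  have cwv := CWV hu hv m0 m1 m2
  have e0 := E0 hu m1 m2
  have comm := UVcomm hu hv m0 m1 m2 h01 h12 h02
  have hvs : v ^ s = 1 := by
    have hp := push m1 cu1 s
    rw [hus, mul_one] at hp
    have := hp.symm
    calc v ^ s = v ^ s * ρ1 * ρ1⁻¹ := by group
    _ = ρ1 * ρ1⁻¹ := by rw [← hp]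
    _ = 1 := by group
  -- power-push lemmas
  have Pu1 : ∀ (m : ℕ) (g : G), ρ1 * (u ^ m * g) = v ^ m * (ρ1 * g) := fun m g => pushc m1 cu1 m g
  have Pv1 : ∀ (m : ℕ) (g : G), ρ1 * (v ^ m * g) = u ^ m * (ρ1 * g) := fun m g => pushc m1 cv1 m g
  have Pw1 : ∀ (m : ℕ) (g : G), ρ1 * (w ^ m * g) = (w ^ m)⁻¹ * (ρ1 * g) := by
    intro m g
    have := pushc m1 cw1 m g
    rwa [inv_pow] at this
  have Pu2 : ∀ (m : ℕ) (g : G), ρ2 * (u ^ m * g) = u ^ m * (ρ2 * g) := fun m g => pushc m2 cu2 m g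
  have Pv2 : ∀ (m : ℕ) (g : G), ρ2 * (v ^ m * g) = (v ^ m)⁻¹ * (ρ2 * g) := by
    intro m g
    have := pushc m2 cv2 m g
    rwa [inv_pow] at this
  have Pw2 : ∀ (m : ℕ) (g : G), ρ2 * (w ^ m * g) = (w ^ m)⁻¹ * (ρ2 * g) := by
    intro m g
    have := pushc m2 cw2 m g
    rwa [inv_pow] at this
  have Pu0 : ∀ (m : ℕ) (g : G), ρ0 * (u ^ m * g) = (u ^ m)⁻¹ * (ρ0 * g) := by
    intro m g
    have := pushc m0 cu0 m g
    rwa [inv_pow] at this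
  have Pv0 : ∀ (m : ℕ) (g : G), ρ0 * (v ^ m * g) = v ^ m * (ρ0 * g) := fun m g => pushc m0 cv0 m g
  have Pwu : ∀ (m : ℕ) (g : G), w * (u ^ m * g) = v ^ m * (w * g) := fun m g => pushgc cwu m g
  have Pwv : ∀ (m : ℕ) (g : G), w * (v ^ m * g) = (u ^ m)⁻¹ * (w * g) := by
    intro m g
    have := pushgc cwv m g
    rwa [inv_pow] at this
  have cuvc : Commute u v := comm
  have Cuv : ∀ (m k : ℕ) (g : G), u ^ m * (v ^ k * g) = v ^ k * (u ^ m * g) := by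
    intro m k g
    rw [← mul_assoc, (cuvc.pow_pow m k).eq, mul_assoc]
  have Sw : ∀ (x y g : G), x * y = y * x → x * (y * g) = y * (x * g) := by
    intro x y g h
    rw [← mul_assoc, h, mul_assoc]
  haveI : Fact (1 < s) := ⟨by omega⟩
  have val1s : (1 : ZMod s).val = 1 := ZMod.val_one s
  rw [← hw] at cw1 cw2 cwu cwv e0
  have hε2 : ∀ ε : ZMod 2, ε = 0 ∨ ε = 1 := by decide
  have hw3 : w ^ 3 = w⁻¹ := by
    have h : w ^ 3 * w = 1 := by rw [← pow_succ]; exact hw4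
    exact eq_inv_of_mul_eq_one_left h
  have hρ2w : w ^ 3 * ρ1 = ρ2 := by
    rw [hw3, hw, mul_inv_rev, inv_self' m1, inv_self' m2, mul_assoc, m1, mul_one]
  have hρ21 : ρ2 * ρ1 = w ^ 3 := by
    rw [← hρ2w, mul_assoc, m1, mul_one]
  -- normal form manipulation lemmas
  have L1 : ∀ (i j : ZMod s) (k : ZMod 4) (ε : ZMod 2),
      ρ1 * F u v w ρ1 (i, j, k, ε) = F u v w ρ1 (j, i, -k, ε + 1) := by
    intro i j k ε
    show ρ1 * (u ^ i.val * v ^ j.val * w ^ k.val * ρ1 ^ ε.val)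
        = u ^ j.val * v ^ i.val * w ^ (-k).val * ρ1 ^ (ε + 1).val
    rw [pv_neg hw4 k, pv_add hr1 ε 1, show ((1 : ZMod 2)).val = 1 from rfl, pow_one]
    simp only [mul_assoc]
    rw [Pu1, Pv1, Pw1, ← Cuv j.val i.val, pow_mul_comm']
  have Lu : ∀ (x i j : ZMod s) (k : ZMod 4) (ε : ZMod 2),
      u ^ x.val * F u v w ρ1 (i, j, k, ε) = F u v w ρ1 (x + i, j, k, ε) := by
    intro x i j k ε
    show u ^ x.val * (u ^ i.val * v ^ j.val * w ^ k.val * ρ1 ^ ε.val)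
        = u ^ (x + i).val * v ^ j.val * w ^ k.val * ρ1 ^ ε.val
    rw [pv_add hus x i]
    simp only [mul_assoc]
  have Lv : ∀ (x i j : ZMod s) (k : ZMod 4) (ε : ZMod 2),
      v ^ x.val * F u v w ρ1 (i, j, k, ε) = F u v w ρ1 (i, x + j, k, ε) := by
    intro x i j k ε
    show v ^ x.val * (u ^ i.val * v ^ j.val * w ^ k.val * ρ1 ^ ε.val)
        = u ^ i.val * v ^ (x + j).val * w ^ k.val * ρ1 ^ ε.val
    rw [pv_add hvs x j]
    simp only [mul_assoc]
    rw [← Cuv i.val x.val]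
  have L4 : ∀ (i j : ZMod s) (k : ZMod 4) (ε : ZMod 2),
      w * F u v w ρ1 (i, j, k, ε) = F u v w ρ1 (-j, i, 1 + k, ε) := by
    intro i j k ε
    show w * (u ^ i.val * v ^ j.val * w ^ k.val * ρ1 ^ ε.val)
        = u ^ (-j).val * v ^ i.val * w ^ (1 + k).val * ρ1 ^ ε.val
    rw [pv_neg hus j, pv_add hw4 1 k, show ((1 : ZMod 4)).val = 1 from rfl, pow_one]
    simp only [mul_assoc]
    rw [Pwu, Pwv]
    rw [Sw (v ^ i.val) ((u ^ j.val)⁻¹) _ ((cuvc.pow_pow j.val i.val).inv_left.eq).symm]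
  have L2 : ∀ (i j : ZMod s) (k : ZMod 4) (ε : ZMod 2),
      ρ2 * F u v w ρ1 (i, j, k, ε) = F u v w ρ1 (i, -j, 3 + -k, ε + 1) := by
    intro i j k ε
    show ρ2 * (u ^ i.val * v ^ j.val * w ^ k.val * ρ1 ^ ε.val)
        = u ^ i.val * v ^ (-j).val * w ^ (3 + -k).val * ρ1 ^ (ε + 1).val
    rw [pv_neg hvs j, pv_add hw4 3 (-k), pv_neg hw4 k,
      show ((3 : ZMod 4)).val = 3 from rfl, pv_add hr1 ε 1,
      show ((1 : ZMod 2)).val = 1 from rfl, pow_one]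
    simp only [mul_assoc]
    rw [Pu2, Pv2, Pw2]
    rcases hε2 ε with h | h <;> subst h
    · rw [show ((0 : ZMod 2)).val = 0 from rfl, pow_zero, mul_one, one_mul, ← hρ2w]
      rw [Sw ((w ^ k.val)⁻¹) (w ^ 3) _ (((Commute.refl w).pow_pow k.val 3).inv_left.eq)]
    · rw [show ((1 : ZMod 2)).val = 1 from rfl, pow_one, m1, mul_one, hρ21]
      rw [(((Commute.refl w).pow_pow k.val 3).inv_left.eq)]
  have L3 : ∀ (i j : ZMod s) (k : ZMod 4) (ε : ZMod 2),
      ρ0 * F u v w ρ1 (i, j, k, ε) = F u v w ρ1 (1 + -i, j, 1 + -k, ε + 1) := by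
    intro i j k ε
    calc ρ0 * F u v w ρ1 (i, j, k, ε) = u * (w * (ρ1 * F u v w ρ1 (i, j, k, ε))) := by
          rw [e0]; simp only [mul_assoc]
      _ = u * (w * F u v w ρ1 (j, i, -k, ε + 1)) := by rw [L1]
      _ = u * F u v w ρ1 (-i, j, 1 + -k, ε + 1) := by rw [L4]
      _ = u ^ (1 : ZMod s).val * F u v w ρ1 (-i, j, 1 + -k, ε + 1) := by rw [val1s, pow_one]
      _ = F u v w ρ1 (1 + -i, j, 1 + -k, ε + 1) := Lu 1 (-i) j (1 + -k) (ε + 1)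
  have R1 : ∀ (i j : ZMod s) (k : ZMod 4) (ε : ZMod 2),
      F u v w ρ1 (i, j, k, ε) * ρ1 = F u v w ρ1 (i, j, k, ε + 1) := by
    intro i j k ε
    show (u ^ i.val * v ^ j.val * w ^ k.val * ρ1 ^ ε.val) * ρ1
        = u ^ i.val * v ^ j.val * w ^ k.val * ρ1 ^ (ε + 1).val
    rw [pv_add hr1 ε 1, show ((1 : ZMod 2)).val = 1 from rfl, pow_one]
    simp only [mul_assoc]
  have f0 : F u v w ρ1 ((0 : ZMod s), (0 : ZMod s), (0 : ZMod 4), (0 : ZMod 2)) = 1 := by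
    show u ^ (0 : ZMod s).val * v ^ (0 : ZMod s).val * w ^ (0 : ZMod 4).val * ρ1 ^ (0 : ZMod 2).val = 1
    rw [ZMod.val_zero, show ((0 : ZMod 4)).val = 0 from rfl, show ((0 : ZMod 2)).val = 0 from rfl]
    simp
  -- surjectivity of the normal form map
  have stab_of : ∀ (S : Set G) (g : G), (∀ x ∈ S, g * x ∈ S) → (∀ x ∈ S, g⁻¹ * x ∈ S) →
      g ∈ MulAction.stabilizer G S := by
    intro S g h1 h2
    have : g • S = S := by
      apply Set.Subset.antisymm
      · rintro _ ⟨x, hx, rfl⟩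
        exact h1 x hx
      · intro x hx
        refine ⟨g⁻¹ * x, h2 x hx, ?_⟩
        simp [smul_eq_mul, ← mul_assoc, mul_inv_cancel]
    exact this
  let S : Set G := Set.range (F u v w ρ1 : ZMod s × ZMod s × ZMod 4 × ZMod 2 → G)
  have hSstab : ∀ g ∈ ({ρ0, ρ1, ρ2} : Set G), g ∈ MulAction.stabilizer G S := by
    intro g hg
    have key : ∀ h : G, h ∈ ({ρ0, ρ1, ρ2} : Set G) → ∀ x ∈ S, h * x ∈ S := by
      rintro h hh x ⟨⟨i, j, k, ε⟩, rfl⟩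
      rcases hh with rfl | rfl | rfl
      · exact ⟨_, (L3 i j k ε).symm⟩
      · exact ⟨_, (L1 i j k ε).symm⟩
      · exact ⟨_, (L2 i j k ε).symm⟩
    have hinv : g⁻¹ = g := by
      rcases hg with rfl | rfl | rfl
      exacts [inv_self' m0, inv_self' m1, inv_self' m2]
    refine stab_of S g (key g hg) ?_
    rw [hinv]
    exact key g hg
  have hstabtop : ∀ g : G, g ∈ MulAction.stabilizer G S := by
    have hle : Subgroup.closure {ρ0, ρ1, ρ2} ≤ MulAction.stabilizer G S :=
      (Subgroup.closure_le _).2 hSstab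
    rw [hgen] at hle
    intro g
    exact hle (Subgroup.mem_top g)
  have hsurj : Function.Surjective (F u v w ρ1 : ZMod s × ZMod s × ZMod 4 × ZMod 2 → G) := by
    intro g
    have h1 : (1 : G) ∈ S := ⟨_, f0⟩
    have h2 : g • S = S := hstabtop g
    have h3 : g • (1 : G) ∈ g • S := Set.smul_mem_smul_set h1
    rw [h2] at h3
    rw [smul_eq_mul, mul_one] at h3
    exact h3
  have hcards : Fintype.card (ZMod s × ZMod s × ZMod 4 × ZMod 2) = Fintype.card G := by
    simp only [Fintype.card_prod, ZMod.card]
    rw [← Nat.card_eq_fintype_card, hG]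
    ring
  have hbij := (Fintype.bijective_iff_surjective_and_card _).2 ⟨hsurj, hcards⟩
  have hinj : Function.Injective (F u v w ρ1 : ZMod s × ZMod s × ZMod 4 × ZMod 2 → G) := hbij.1
  -- the subgroup H and its normal form description
  set H : Subgroup G := Subgroup.closure {u ^ a, v ^ b, ρ0} with hH
  set a' : ZMod s := ((a : ℕ) : ZMod s) with ha'
  set b' : ZMod s := ((b : ℕ) : ZMod s) with hb'
  have hs1 : (1 : ℕ) ≤ s := by omega
  have negmul : ∀ (c x : ZMod s), (∃ m : ℕ, x = (m : ZMod s) * c) →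
      (∃ m : ℕ, -x = (m : ZMod s) * c) := by
    rintro c x ⟨m, rfl⟩
    refine ⟨m * (s - 1), ?_⟩
    have h1 : ((s : ℕ) : ZMod s) = 0 := ZMod.natCast_self s
    push_cast [Nat.cast_sub hs1]
    rw [h1]
    ring
  have addmul : ∀ (c x y : ZMod s), (∃ m : ℕ, x = (m : ZMod s) * c) →
      (∃ m : ℕ, y = (m : ZMod s) * c) → (∃ m : ℕ, x + y = (m : ZMod s) * c) := by
    rintro c x y ⟨m, rfl⟩ ⟨n, rfl⟩
    exact ⟨m + n, by push_cast; ring⟩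
  have selfmul : ∀ c : ZMod s, ∃ m : ℕ, c = (m : ZMod s) * c := fun c => ⟨1, by push_cast; ring⟩
  have zeromul : ∀ c : ZMod s, ∃ m : ℕ, (0 : ZMod s) = (m : ZMod s) * c :=
    fun c => ⟨0, by push_cast; ring⟩
  set Hset : Set (ZMod s × ZMod s × ZMod 4 × ZMod 2) :=
    {p | (p.2.2.1 = 0 ∧ p.2.2.2 = 0 ∧ (∃ m : ℕ, p.1 = (m : ZMod s) * a') ∧
            (∃ m : ℕ, p.2.1 = (m : ZMod s) * b')) ∨
         (p.2.2.1 = 1 ∧ p.2.2.2 = 1 ∧ (∃ m : ℕ, p.1 + -1 = (m : ZMod s) * a') ∧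
            (∃ m : ℕ, p.2.1 = (m : ZMod s) * b'))} with hHset
  set S' : Set G := (F u v w ρ1 : ZMod s × ZMod s × ZMod 4 × ZMod 2 → G) '' Hset with hS'
  have hS'zero : ((0 : ZMod s), (0 : ZMod s), (0 : ZMod 4), (0 : ZMod 2)) ∈ Hset :=
    Or.inl ⟨rfl, rfl, zeromul a', zeromul b'⟩
  have h1S' : (1 : G) ∈ S' := ⟨_, hS'zero, f0⟩
  -- the three generators of H stabilize S'
  have hua' : u ^ a = u ^ (a' : ZMod s).val := (pv_natCast hus a).symm
  have hvb' : v ^ b = v ^ (b' : ZMod s).val := (pv_natCast hvs b).symm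
  have huainv : (u ^ a)⁻¹ = u ^ ((-a' : ZMod s)).val := by rw [pv_neg hus a', ← hua']
  have hvbinv : (v ^ b)⁻¹ = v ^ ((-b' : ZMod s)).val := by rw [pv_neg hvs b', ← hvb']
  have upres : ∀ (x : ZMod s), (∃ m : ℕ, x = (m : ZMod s) * a') →
      ∀ g ∈ S', u ^ x.val * g ∈ S' := by
    rintro x hxm g ⟨⟨i, j, k, ε⟩, hp, rfl⟩
    rw [Lu x i j k ε]
    refine ⟨_, ?_, rfl⟩
    rcases hp with ⟨hk, he, hP1, hP2⟩ | ⟨hk, he, hP1, hP2⟩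
    · exact Or.inl ⟨hk, he, addmul _ _ _ hxm hP1, hP2⟩
    · refine Or.inr ⟨hk, he, ?_, hP2⟩
      have heq : (x + i) + -1 = x + (i + -1) := by ring
      rw [heq]
      exact addmul _ _ _ hxm hP1
  have vpres : ∀ (x : ZMod s), (∃ m : ℕ, x = (m : ZMod s) * b') →
      ∀ g ∈ S', v ^ x.val * g ∈ S' := by
    rintro x hxm g ⟨⟨i, j, k, ε⟩, hp, rfl⟩
    rw [Lv x i j k ε]
    refine ⟨_, ?_, rfl⟩
    rcases hp with ⟨hk, he, hP1, hP2⟩ | ⟨hk, he, hP1, hP2⟩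
    · exact Or.inl ⟨hk, he, hP1, addmul _ _ _ hxm hP2⟩
    · exact Or.inr ⟨hk, he, hP1, addmul _ _ _ hxm hP2⟩
  have r0pres : ∀ g ∈ S', ρ0 * g ∈ S' := by
    rintro g ⟨⟨i, j, k, ε⟩, hp, rfl⟩
    rw [L3 i j k ε]
    refine ⟨_, ?_, rfl⟩
    rcases hp with ⟨hk, he, hP1, hP2⟩ | ⟨hk, he, hP1, hP2⟩ <;>
      dsimp only at hk he hP1 hP2
    · refine Or.inr ⟨?_, ?_, ?_, hP2⟩
      · show 1 + -k = 1
        rw [hk]; ring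
      · show ε + 1 = 1
        rw [he]; decide
      · show ∃ m : ℕ, (1 + -i) + -1 = (m : ZMod s) * a'
        have heq : (1 + -i) + -1 = -i := by ring
        rw [heq]
        exact negmul _ _ hP1
    · refine Or.inl ⟨?_, ?_, ?_, hP2⟩
      · show 1 + -k = 0
        rw [hk]; ring
      · show ε + 1 = 0
        rw [he]; decide
      · show ∃ m : ℕ, (1 + -i) = (m : ZMod s) * a'
        have heq : 1 + -i = -(i + -1) := by ring
        rw [heq]
        exact negmul _ _ hP1
  have hHstab : H ≤ MulAction.stabilizer G S' := by
    rw [hH]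
    apply (Subgroup.closure_le _).2
    rintro g (rfl | rfl | rfl)
    · refine stab_of S' _ ?_ ?_
      · intro x hx
        rw [hua']
        exact upres a' (selfmul a') x hx
      · intro x hx
        rw [huainv]
        exact upres (-a') (negmul _ _ (selfmul a')) x hx
    · refine stab_of S' _ ?_ ?_
      · intro x hx
        rw [hvb']
        exact vpres b' (selfmul b') x hx
      · intro x hx
        rw [hvbinv]
        exact vpres (-b') (negmul _ _ (selfmul b')) x hx
    · refine stab_of S' _ (r0pres) ?_
      rw [inv_self' m0]
      exact r0pres
  have hHsubS' : (H : Set G) ⊆ S' := by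
    intro g hg
    have h2 : g • S' = S' := hHstab hg
    have h3 : g • (1 : G) ∈ g • S' := Set.smul_mem_smul_set h1S'
    rw [h2, smul_eq_mul, mul_one] at h3
    exact h3
  -- membership of generators in H
  have huaH : u ^ a ∈ H := Subgroup.subset_closure (by simp)
  have hvbH : v ^ b ∈ H := Subgroup.subset_closure (by simp)
  have hρ0H : ρ0 ∈ H := Subgroup.subset_closure (by simp)
  have hS'subH : S' ⊆ (H : Set G) := by
    rintro g ⟨⟨i, j, k, ε⟩, hp, rfl⟩
    rcases hp with ⟨hk, he, ⟨m, hm⟩, ⟨n, hn⟩⟩ | ⟨hk, he, ⟨m, hm⟩, ⟨n, hn⟩⟩ <;>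
      dsimp only at hk he hm hn
    · have hi : u ^ i.val = (u ^ a) ^ m := by
        rw [hm, show ((m : ZMod s) * a') = ((m * a : ℕ) : ZMod s) by push_cast; ring,
          pv_natCast hus, mul_comm m a, pow_mul]
      have hj : v ^ j.val = (v ^ b) ^ n := by
        rw [hn, show ((n : ZMod s) * b') = ((n * b : ℕ) : ZMod s) by push_cast; ring,
          pv_natCast hvs, mul_comm n b, pow_mul]
      have hfp : F u v w ρ1 (i, j, k, ε) = (u ^ a) ^ m * (v ^ b) ^ n := by
        show u ^ i.val * v ^ j.val * w ^ k.val * ρ1 ^ ε.val = _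
        rw [hk, he, show ((0 : ZMod 4)).val = 0 from rfl, show ((0 : ZMod 2)).val = 0 from rfl,
          pow_zero, pow_zero, mul_one, mul_one, hi, hj]
      rw [hfp]
      exact H.mul_mem (H.pow_mem huaH m) (H.pow_mem hvbH n)
    · have hi : u ^ i.val = (u ^ a) ^ m * u := by
        have him : i = ((m * a + 1 : ℕ) : ZMod s) := by
          have : i = (m : ZMod s) * a' + 1 := by
            have := hm
            linear_combination this
          rw [this]; push_cast; ring
        rw [him, pv_natCast hus, pow_succ, mul_comm m a, pow_mul]
      have hj : v ^ j.val = (v ^ b) ^ n := by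
        rw [hn, show ((n : ZMod s) * b') = ((n * b : ℕ) : ZMod s) by push_cast; ring,
          pv_natCast hvs, mul_comm n b, pow_mul]
      have hfp : F u v w ρ1 (i, j, k, ε) = (u ^ a) ^ m * ((v ^ b) ^ n * ρ0) := by
        show u ^ i.val * v ^ j.val * w ^ k.val * ρ1 ^ ε.val = _
        rw [hk, he, show ((1 : ZMod 4)).val = 1 from rfl, show ((1 : ZMod 2)).val = 1 from rfl,
          pow_one, pow_one, hi, hj, e0]
        simp only [mul_assoc]
        rw [Sw u ((v ^ b) ^ n) _ ((cuvc.pow_right b).pow_right n).eq]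
      rw [hfp]
      exact H.mul_mem (H.pow_mem huaH m) (H.mul_mem (H.pow_mem hvbH n) hρ0H)
  have hHS' : (H : Set G) = S' := Set.Subset.antisymm hHsubS' hS'subH
  -- counting
  set q1 : ℕ := s / a with hq1def
  set q2 : ℕ := s / b with hq2def
  have hq1 : q1 * a = s := Nat.div_mul_cancel has
  have hq2 : q2 * b = s := Nat.div_mul_cancel hbs
  have hq1pos : 0 < q1 := Nat.div_pos (Nat.le_of_dvd (by omega) has) ha
  have hq2pos : 0 < q2 := Nat.div_pos (Nat.le_of_dvd (by omega) hbs) hb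
  have hlt1 : ∀ m : Fin q1, (m : ℕ) * a < s := by
    intro m
    have h1 : (m : ℕ) * a < q1 * a := mul_lt_mul_of_pos_right m.isLt ha
    rwa [hq1] at h1
  have hlt2 : ∀ n : Fin q2, (n : ℕ) * b < s := by
    intro n
    have h1 : (n : ℕ) * b < q2 * b := mul_lt_mul_of_pos_right n.isLt hb
    rwa [hq2] at h1
  have hmoda : ∀ m : ℕ, (((m % q1) * a : ℕ) : ZMod s) = (m : ZMod s) * a' := by
    intro m
    have hdecomp : m * a = (m / q1) * s + (m % q1) * a := by
      calc m * a = (q1 * (m / q1) + m % q1) * a := by rw [Nat.div_add_mod]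
        _ = (m / q1) * (q1 * a) + (m % q1) * a := by ring
        _ = (m / q1) * s + (m % q1) * a := by rw [hq1]
    have hc := congrArg (fun t : ℕ => ((t : ℕ) : ZMod s)) hdecomp
    push_cast at hc
    rw [ZMod.natCast_self, mul_zero, zero_add] at hc
    rw [ha']
    push_cast
    exact hc.symm
  have hmodb : ∀ n : ℕ, (((n % q2) * b : ℕ) : ZMod s) = (n : ZMod s) * b' := by
    intro n
    have hdecomp : n * b = (n / q2) * s + (n % q2) * b := by
      calc n * b = (q2 * (n / q2) + n % q2) * b := by rw [Nat.div_add_mod]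
        _ = (n / q2) * (q2 * b) + (n % q2) * b := by ring
        _ = (n / q2) * s + (n % q2) * b := by rw [hq2]
    have hc := congrArg (fun t : ℕ => ((t : ℕ) : ZMod s)) hdecomp
    push_cast at hc
    rw [ZMod.natCast_self, mul_zero, zero_add] at hc
    rw [hb']
    push_cast
    exact hc.symm
  set E : Fin q1 × Fin q2 × Bool → ZMod s × ZMod s × ZMod 4 × ZMod 2 := fun t =>
    if t.2.2 then ((((t.1 : ℕ) * a : ℕ) : ZMod s) + 1, (((t.2.1 : ℕ) * b : ℕ) : ZMod s), 1, 1)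
    else ((((t.1 : ℕ) * a : ℕ) : ZMod s), (((t.2.1 : ℕ) * b : ℕ) : ZMod s), 0, 0) with hE
  have hEf : ∀ (m : Fin q1) (n : Fin q2),
      E (m, n, false) = ((((m : ℕ) * a : ℕ) : ZMod s), (((n : ℕ) * b : ℕ) : ZMod s), 0, 0) := by
    intro m n; rfl
  have hEt : ∀ (m : Fin q1) (n : Fin q2),
      E (m, n, true) = ((((m : ℕ) * a : ℕ) : ZMod s) + 1, (((n : ℕ) * b : ℕ) : ZMod s), 1, 1) := by
    intro m n; rfl
  have hcastinj_a : ∀ (m m' : Fin q1),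
      (((m : ℕ) * a : ℕ) : ZMod s) = (((m' : ℕ) * a : ℕ) : ZMod s) → m = m' := by
    intro m m' h
    have h2 := congrArg ZMod.val h
    rw [ZMod.val_natCast, ZMod.val_natCast, Nat.mod_eq_of_lt (hlt1 m),
      Nat.mod_eq_of_lt (hlt1 m')] at h2
    exact Fin.ext (Nat.eq_of_mul_eq_mul_right ha h2)
  have hcastinj_b : ∀ (n n' : Fin q2),
      (((n : ℕ) * b : ℕ) : ZMod s) = (((n' : ℕ) * b : ℕ) : ZMod s) → n = n' := by
    intro n n' h
    have h2 := congrArg ZMod.val h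
    rw [ZMod.val_natCast, ZMod.val_natCast, Nat.mod_eq_of_lt (hlt2 n),
      Nat.mod_eq_of_lt (hlt2 n')] at h2
    exact Fin.ext (Nat.eq_of_mul_eq_mul_right hb h2)
  have hEinj : Function.Injective E := by
    rintro ⟨m, n, c⟩ ⟨m', n', c'⟩ h
    cases c <;> cases c'
    · rw [hEf, hEf, Prod.mk.injEq, Prod.mk.injEq, Prod.mk.injEq] at h
      rw [hcastinj_a _ _ h.1, hcastinj_b _ _ h.2.1]
    · rw [hEf, hEt, Prod.mk.injEq, Prod.mk.injEq, Prod.mk.injEq] at h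
      exact absurd h.2.2.2 (by decide)
    · rw [hEt, hEf, Prod.mk.injEq, Prod.mk.injEq, Prod.mk.injEq] at h
      exact absurd h.2.2.2 (by decide)
    · rw [hEt, hEt, Prod.mk.injEq, Prod.mk.injEq, Prod.mk.injEq] at h
      rw [hcastinj_a _ _ (add_right_cancel h.1), hcastinj_b _ _ h.2.1]
  have hErange : Set.range E = Hset := by
    apply Set.Subset.antisymm
    · rintro _ ⟨⟨m, n, c⟩, rfl⟩
      cases c
      · rw [hEf]
        exact Or.inl ⟨rfl, rfl, ⟨m, by rw [ha']; push_cast; ring⟩,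
          ⟨n, by rw [hb']; push_cast; ring⟩⟩
      · rw [hEt]
        refine Or.inr ⟨rfl, rfl, ⟨m, ?_⟩, ⟨n, by rw [hb']; push_cast; ring⟩⟩
        show ((((m : ℕ) * a : ℕ) : ZMod s) + 1) + -1 = ((m : ℕ) : ZMod s) * a'
        rw [ha']; push_cast; ring
    · rintro ⟨i, j, k, ε⟩ hp
      rcases hp with ⟨hk, he, ⟨m, hm⟩, ⟨n, hn⟩⟩ | ⟨hk, he, ⟨m, hm⟩, ⟨n, hn⟩⟩ <;>
        dsimp only at hk he hm hn
      · refine ⟨(⟨m % q1, Nat.mod_lt m hq1pos⟩, ⟨n % q2, Nat.mod_lt n hq2pos⟩, false), ?_⟩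
        rw [hEf]
        show ((((m % q1) * a : ℕ) : ZMod s), (((n % q2) * b : ℕ) : ZMod s),
          (0 : ZMod 4), (0 : ZMod 2)) = (i, j, k, ε)
        rw [hmoda, hmodb, ← hm, ← hn, ← hk, ← he]
      · refine ⟨(⟨m % q1, Nat.mod_lt m hq1pos⟩, ⟨n % q2, Nat.mod_lt n hq2pos⟩, true), ?_⟩
        rw [hEt]
        have him : i = ((m : ℕ) : ZMod s) * a' + 1 := by linear_combination hm
        show ((((m % q1) * a : ℕ) : ZMod s) + 1, (((n % q2) * b : ℕ) : ZMod s),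
          (1 : ZMod 4), (1 : ZMod 2)) = (i, j, k, ε)
        rw [hmoda, hmodb, ← him, ← hn, ← hk, ← he]
  have hcard1 : Nat.card Hset = q1 * (q2 * 2) := by
    rw [← hErange, Nat.card_range_of_injective hEinj]
    simp [Nat.card_eq_fintype_card]
  have hcardH : Nat.card H = q1 * (q2 * 2) := by
    have e1 : Nat.card H = Nat.card S' := Nat.card_congr (Equiv.setCongr hHS')
    rw [e1, hS', Nat.card_image_of_injective hinj]
    exact hcard1
  have hkey := Subgroup.card_mul_index H
  rw [hcardH, hG] at hkey
  have harith : q1 * (q2 * 2) * (4 * a * b) = 8 * s ^ 2 := by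
    calc q1 * (q2 * 2) * (4 * a * b) = 8 * ((q1 * a) * (q2 * b)) := by ring
    _ = 8 * (s * s) := by rw [hq1, hq2]
    _ = 8 * s ^ 2 := by ring
  have hidx : H.index = 4 * a * b := by
    have hpos : 0 < q1 * (q2 * 2) := Nat.mul_pos hq1pos (Nat.mul_pos hq2pos (by norm_num))
    exact Nat.eq_of_mul_eq_mul_left hpos (hkey.trans harith.symm)
  refine ⟨?_, hidx⟩
  -- the normal core is trivial
  rw [Subgroup.eq_bot_iff_forall]
  intro x hx
  have hxH : x ∈ H := H.normalCore_le hx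
  have hxS' : x ∈ S' := by
    have h1 : x ∈ (H : Set G) := hxH
    rwa [hHS'] at h1
  obtain ⟨⟨i, j, k, ε⟩, hp, hfx⟩ := hxS'
  have hcon : ρ1 * x * ρ1 ∈ H := by
    have h := (show ∀ bb : G, bb * x * bb⁻¹ ∈ H from hx) ρ1
    rwa [inv_self' m1] at h
  have hee : ε + 1 + 1 = ε := by
    rw [add_assoc, show ((1 : ZMod 2) + 1) = 0 by decide, add_zero]
  have hconj : ρ1 * x * ρ1 = F u v w ρ1 (j, i, -k, ε) := by
    rw [← hfx, L1 i j k ε, R1 j i (-k) (ε + 1), hee]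
  have hconS' : F u v w ρ1 (j, i, -k, ε) ∈ S' := by
    have h1 : F u v w ρ1 (j, i, -k, ε) ∈ (H : Set G) := by rw [← hconj]; exact hcon
    rwa [hHS'] at h1
  obtain ⟨q, hq, hfq⟩ := hconS'
  rw [hinj hfq] at hq
  rcases hp with ⟨hk, he, ⟨m, hm⟩, ⟨n, hn⟩⟩ | ⟨hk, he, hP1, hP2⟩
  · dsimp only at hk he hm hn
    rcases hq with ⟨_, _, ⟨m', hm'⟩, ⟨n', hn'⟩⟩ | ⟨hk2, _⟩
    · dsimp only at hm' hn'
      have hia : a ∣ i.val := by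
        have h1 : i = ((m * a : ℕ) : ZMod s) := by rw [hm, ha']; push_cast; ring
        rw [h1, ZMod.val_natCast]
        exact (Nat.dvd_mod_iff has).2 (dvd_mul_left a m)
      have hib : b ∣ i.val := by
        have h1 : i = ((n' * b : ℕ) : ZMod s) := by rw [hn', hb']; push_cast; ring
        rw [h1, ZMod.val_natCast]
        exact (Nat.dvd_mod_iff hbs).2 (dvd_mul_left b n')
      have hja : a ∣ j.val := by
        have h1 : j = ((m' * a : ℕ) : ZMod s) := by rw [hm', ha']; push_cast; ring
        rw [h1, ZMod.val_natCast]
        exact (Nat.dvd_mod_iff has).2 (dvd_mul_left a m')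
      have hjb : b ∣ j.val := by
        have h1 : j = ((n * b : ℕ) : ZMod s) := by rw [hn, hb']; push_cast; ring
        rw [h1, ZMod.val_natCast]
        exact (Nat.dvd_mod_iff hbs).2 (dvd_mul_left b n)
      have hi0 : i = 0 := by
        rw [← ZMod.val_eq_zero]
        have hd : Nat.lcm a b ∣ i.val := Nat.lcm_dvd hia hib
        rw [← hlcm] at hd
        exact Nat.eq_zero_of_dvd_of_lt hd (ZMod.val_lt i)
      have hj0 : j = 0 := by
        rw [← ZMod.val_eq_zero]
        have hd : Nat.lcm a b ∣ j.val := Nat.lcm_dvd hja hjb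
        rw [← hlcm] at hd
        exact Nat.eq_zero_of_dvd_of_lt hd (ZMod.val_lt j)
      rw [← hfx, hi0, hj0, hk, he, f0]
    · dsimp only at hk hk2
      rw [hk, neg_zero] at hk2
      exact absurd hk2 (by decide)
  · dsimp only at hk
    rcases hq with ⟨hk2, _⟩ | ⟨hk2, _⟩ <;> dsimp only at hk2 <;> rw [hk] at hk2 <;>
      exact absurd hk2 (by decide)
end

section
/- Let s > 2 and let a, b be positive integers with s = lcm(a, b) and a·b ≠ s. Then the subgroup H = ⟨u^a, v^b, ρ0, ρ2⟩ of G is core-free and has index 2ab in G. -/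
set_option maxHeartbeats 4000000 in
theorem stmt7 (s a b : ℕ) (hs : 2 < s) (ha : 0 < a) (hb : 0 < b)
    (hlcm : s = Nat.lcm a b) (hab : a * b ≠ s)
    (G : Type*) [Group G] [Finite G] (ρ0 ρ1 ρ2 : G)
    (hgen : Subgroup.closure {ρ0, ρ1, ρ2} = ⊤)
    (hr0 : ρ0 ^ 2 = 1) (hr1 : ρ1 ^ 2 = 1) (hr2 : ρ2 ^ 2 = 1)
    (h01 : (ρ0 * ρ1) ^ 4 = 1) (h12 : (ρ1 * ρ2) ^ 4 = 1) (h02 : (ρ0 * ρ2) ^ 2 = 1)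
    (hmap : (ρ0 * ρ1 * ρ2 * ρ1) ^ s = 1)
    (hG : Nat.card G = 8 * s ^ 2)
    (u v : G) (hu : u = ρ0 * ρ1 * ρ2 * ρ1) (hv : v = ρ1 * u * ρ1)
    : (Subgroup.closure {u ^ a, v ^ b, ρ0, ρ2}).normalCore = ⊥ ∧
      (Subgroup.closure {u ^ a, v ^ b, ρ0, ρ2}).index = 2 * a * b := by
  have m0 : ρ0 * ρ0 = 1 := by rw [← sq]; exact hr0
  have m1 : ρ1 * ρ1 = 1 := by rw [← sq]; exact hr1
  have m2 : ρ2 * ρ2 = 1 := by rw [← sq]; exact hr2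
  have s0 : ∀ x : G, ρ0 * (ρ0 * x) = x := fun x => by rw [← mul_assoc, m0, one_mul]
  have s1 : ∀ x : G, ρ1 * (ρ1 * x) = x := fun x => by rw [← mul_assoc, m1, one_mul]
  have s2 : ∀ x : G, ρ2 * (ρ2 * x) = x := fun x => by rw [← mul_assoc, m2, one_mul]
  have i0 : ρ0⁻¹ = ρ0 := by rw [inv_eq_iff_mul_eq_one]; exact m0
  have i1 : ρ1⁻¹ = ρ1 := by rw [inv_eq_iff_mul_eq_one]; exact m1
  have i2 : ρ2⁻¹ = ρ2 := by rw [inv_eq_iff_mul_eq_one]; exact m2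
  have c20 : ρ2 * ρ0 = ρ0 * ρ2 := by
    have h : (ρ0 * ρ2)⁻¹ = ρ0 * ρ2 := by
      rw [inv_eq_iff_mul_eq_one, ← sq]; exact h02
    rw [mul_inv_rev, i0, i2] at h; exact h
  have q01 : ρ1 * ρ0 * (ρ1 * ρ0) = ρ0 * ρ1 * (ρ0 * ρ1) := by
    have h : ((ρ0 * ρ1) ^ 2)⁻¹ = (ρ0 * ρ1) ^ 2 := by
      rw [inv_eq_iff_mul_eq_one, ← sq, ← pow_mul]; exact h01
    rw [← inv_pow, mul_inv_rev, i0, i1] at h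
    simpa [sq, mul_assoc] using h
  have q12 : ρ2 * ρ1 * (ρ2 * ρ1) = ρ1 * ρ2 * (ρ1 * ρ2) := by
    have h : ((ρ1 * ρ2) ^ 2)⁻¹ = (ρ1 * ρ2) ^ 2 := by
      rw [inv_eq_iff_mul_eq_one, ← sq, ← pow_mul]; exact h12
    rw [← inv_pow, mul_inv_rev, i1, i2] at h
    simpa [sq, mul_assoc] using h

  have w20 : ∀ x : G, ρ2 * (ρ0 * x) = ρ0 * (ρ2 * x) := fun x => by
    rw [← mul_assoc, c20, mul_assoc]
  have w01 : ∀ x : G, ρ1 * (ρ0 * (ρ1 * (ρ0 * x))) = ρ0 * (ρ1 * (ρ0 * (ρ1 * x))) := fun x => by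
    simpa [mul_assoc] using congrArg (· * x) q01
  have w12 : ∀ x : G, ρ2 * (ρ1 * (ρ2 * (ρ1 * x))) = ρ1 * (ρ2 * (ρ1 * (ρ2 * x))) := fun x => by
    simpa [mul_assoc] using congrArg (· * x) q12
  have t01 : ρ1 * (ρ0 * (ρ1 * ρ0)) = ρ0 * (ρ1 * (ρ0 * ρ1)) := by
    simpa [mul_assoc] using q01
  have t12 : ρ2 * (ρ1 * (ρ2 * ρ1)) = ρ1 * (ρ2 * (ρ1 * ρ2)) := by
    simpa [mul_assoc] using q12
  have su0 : ρ0 * u = u⁻¹ * ρ0 := by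
    simp [hu, mul_inv_rev, i0, i1, i2, mul_assoc, s0, s1, s2, m0, m1, m2]
  have su2 : ρ2 * u = u * ρ2 := by
    simp [hu, mul_assoc, s0, s1, s2, m0, m1, m2, w20, w12, t12, c20]
  have su1 : ρ1 * u = v * ρ1 := by
    simp [hv, mul_assoc, s1, m1]
  have sv1 : ρ1 * v = u * ρ1 := by
    simp [hv, mul_assoc, s1, m1]
  have sv0 : ρ0 * v = v * ρ0 := by
    simp [hv, hu, mul_assoc, s0, s1, s2, m0, m1, m2, w20, w01, t01, c20]
  have sv2 : ρ2 * v = v⁻¹ * ρ2 := by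
    simp [hv, hu, mul_inv_rev, i0, i1, i2, mul_assoc, s0, s1, s2, m0, m1, m2, w20, w12, t12, c20]
  have cuv : u * v = v * u := by
    simp [hv, hu, mul_assoc, s0, s1, s2, m0, m1, m2, w20, w01, w12, t01, t12, c20]
  have hus : u ^ s = 1 := by rw [hu]; exact hmap
  have hvs : v ^ s = 1 := by
    have hv' : v = ρ1 * u * ρ1⁻¹ := by rw [i1]; exact hv
    rw [hv', conj_pow, hus, mul_one, i1, m1]
  have uinv : u⁻¹ = u ^ (s - 1) := by
    rw [inv_eq_iff_mul_eq_one, ← pow_succ']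
    have : s - 1 + 1 = s := by omega
    rw [this]; exact hus
  have vinv : v⁻¹ = v ^ (s - 1) := by
    rw [inv_eq_iff_mul_eq_one, ← pow_succ']
    have : s - 1 + 1 = s := by omega
    rw [this]; exact hvs
  -- move lemmas with tails
  have MU0 : ∀ (i : ℕ) (x : G), ρ0 * (u ^ i * x) = u ^ ((s-1)*i) * (ρ0 * x) := by
    intro i x
    have hsc : SemiconjBy ρ0 u (u ^ (s-1)) := by
      unfold SemiconjBy; rw [su0, uinv]
    have := (hsc.pow_right i).eq
    rw [← mul_assoc, this, ← pow_mul, mul_assoc]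
  have MV0 : ∀ (j : ℕ) (x : G), ρ0 * (v ^ j * x) = v ^ j * (ρ0 * x) := by
    intro j x
    have hc : Commute ρ0 (v ^ j) := Commute.pow_right sv0 j
    rw [← mul_assoc, hc.eq, mul_assoc]
  have MU2 : ∀ (i : ℕ) (x : G), ρ2 * (u ^ i * x) = u ^ i * (ρ2 * x) := by
    intro i x
    have hc : Commute ρ2 (u ^ i) := Commute.pow_right su2 i
    rw [← mul_assoc, hc.eq, mul_assoc]
  have MV2 : ∀ (j : ℕ) (x : G), ρ2 * (v ^ j * x) = v ^ ((s-1)*j) * (ρ2 * x) := by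
    intro j x
    have hsc : SemiconjBy ρ2 v (v ^ (s-1)) := by
      unfold SemiconjBy; rw [sv2, vinv]
    have := (hsc.pow_right j).eq
    rw [← mul_assoc, this, ← pow_mul, mul_assoc]
  have MU1 : ∀ (i : ℕ) (x : G), ρ1 * (u ^ i * x) = v ^ i * (ρ1 * x) := by
    intro i x
    have hsc : SemiconjBy ρ1 u v := su1
    have := (hsc.pow_right i).eq
    rw [← mul_assoc, this, mul_assoc]
  have MV1 : ∀ (j : ℕ) (x : G), ρ1 * (v ^ j * x) = u ^ j * (ρ1 * x) := by
    intro j x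
    have hsc : SemiconjBy ρ1 v u := sv1
    have := (hsc.pow_right j).eq
    rw [← mul_assoc, this, mul_assoc]
  have cvu : Commute v u := by unfold Commute SemiconjBy; rw [cuv]
  have MUV : ∀ (j i : ℕ) (x : G), v ^ j * (u ^ i * x) = u ^ i * (v ^ j * x) := by
    intro j i x
    have hc : Commute (v ^ j) (u ^ i) := Commute.pow_pow cvu j i
    rw [← mul_assoc, hc.eq, mul_assoc]
  -- u/v power collection
  have PU : ∀ (i i' : ℕ) (x : G), u ^ i * (u ^ i' * x) = u ^ (i + i') * x := by
    intro i i' x; rw [← mul_assoc, ← pow_add]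
  have PV : ∀ (j j' : ℕ) (x : G), v ^ j * (v ^ j' * x) = v ^ (j + j') * x := by
    intro j j' x; rw [← mul_assoc, ← pow_add]
  -- dihedral part: C := ρ0 * ρ1
  have crho : (ρ0 * ρ1) * ρ0 = ρ0 * (ρ0 * ρ1) ^ 3 := by
    simp [pow_succ, mul_assoc, s0, s1, m0, m1, w01, t01]
  have Crho : ∀ (m : ℕ) (x : G), (ρ0 * ρ1) ^ m * (ρ0 * x) = ρ0 * ((ρ0 * ρ1) ^ (3 * m) * x) := by
    intro m x
    have hsc : SemiconjBy ρ0 ((ρ0 * ρ1) ^ 3) (ρ0 * ρ1) := by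
      unfold SemiconjBy; rw [← crho]
    have := (hsc.pow_right m).eq
    rw [← pow_mul] at this
    rw [← mul_assoc, ← this, mul_assoc]
  have hrho2 : ρ2 = v ^ (s-1) * (ρ0 * (ρ0*ρ1)^2) := by
    rw [← vinv]
    simp [hv, hu, mul_inv_rev, i0, i1, i2, pow_succ, mul_assoc, s0, s1, s2, m0, m1, m2]
  have MCU : ∀ (i : ℕ) (x : G), (ρ0*ρ1) * (u ^ i * x) = v ^ i * ((ρ0*ρ1) * x) := by
    intro i x
    rw [mul_assoc, MU1, MV0]; simp [mul_assoc]
  have MCV : ∀ (j : ℕ) (x : G), (ρ0*ρ1) * (v ^ j * x) = u ^ ((s-1)*j) * ((ρ0*ρ1) * x) := by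
    intro j x
    rw [mul_assoc, MV1, MU0]; simp [mul_assoc]
  have MC2U : ∀ (i : ℕ) (x : G), (ρ0*ρ1)^2 * (u ^ i * x) = u ^ ((s-1)*i) * ((ρ0*ρ1)^2 * x) := by
    intro i x
    rw [sq, mul_assoc, MCU, MCV]; simp [mul_assoc]
  have MC2V : ∀ (j : ℕ) (x : G), (ρ0*ρ1)^2 * (v ^ j * x) = v ^ ((s-1)*j) * ((ρ0*ρ1)^2 * x) := by
    intro j x
    rw [sq, mul_assoc, MCV, MCU]; simp [mul_assoc]
  have Dmove : ∀ (e m : ℕ) (x : G), (ρ0*ρ1)^m * (ρ0^e * x) = ρ0^e * ((ρ0*ρ1)^(3^e*m) * x) := by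
    intro e
    induction e with
    | zero => intro m x; simp
    | succ e ih =>
      intro m x
      rw [pow_succ ρ0 e, mul_assoc (ρ0^e) ρ0 x, ih m (ρ0*x), Crho, ← mul_assoc (ρ0^e) ρ0, ← pow_succ]
      have h3 : 3 * (3 ^ e * m) = 3 ^ (e+1) * m := by ring
      rw [h3]
  have R0S : ∀ (e : ℕ) (x : G), ρ0 * (ρ0^e * x) = ρ0^(e+1) * x := by
    intro e x; rw [← mul_assoc, ← pow_succ']
  have Mρ0D : ∀ (e m : ℕ), ρ0 * (ρ0^e * (ρ0*ρ1)^m) = ρ0^(e+1) * (ρ0*ρ1)^m := by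
    intro e m; exact R0S e _
  have Mρ1D : ∀ (e m : ℕ), ρ1 * (ρ0^e * (ρ0*ρ1)^m) = ρ0^(e+1) * (ρ0*ρ1)^(3^e + m) := by
    intro e m
    calc ρ1 * (ρ0^e * (ρ0*ρ1)^m) = ρ0 * ((ρ0*ρ1) * (ρ0^e * (ρ0*ρ1)^m)) := by
          simp [mul_assoc, s0]
      _ = ρ0 * ((ρ0*ρ1)^1 * (ρ0^e * (ρ0*ρ1)^m)) := by rw [pow_one]
      _ = ρ0 * (ρ0^e * ((ρ0*ρ1)^(3^e*1) * (ρ0*ρ1)^m)) := by rw [Dmove]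
      _ = ρ0^(e+1) * (ρ0*ρ1)^(3^e + m) := by rw [R0S, ← pow_add, mul_one]
  have Mρ2D : ∀ (e m : ℕ), ρ2 * (ρ0^e * (ρ0*ρ1)^m) = v^(s-1) * (ρ0^(e+1) * (ρ0*ρ1)^(3^e*2 + m)) := by
    intro e m
    calc ρ2 * (ρ0^e * (ρ0*ρ1)^m) = v^(s-1) * ((ρ0 * ((ρ0*ρ1)^2 * (ρ0^e * (ρ0*ρ1)^m)))) := by
          rw [hrho2]; simp [mul_assoc]
      _ = v^(s-1) * (ρ0 * (ρ0^e * ((ρ0*ρ1)^(3^e*2) * (ρ0*ρ1)^m))) := by rw [Dmove]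
      _ = v^(s-1) * (ρ0^(e+1) * (ρ0*ρ1)^(3^e*2 + m)) := by rw [R0S, ← pow_add]
  have NFall : ∀ g : G, ∃ i j e m : ℕ, g = u^i * (v^j * (ρ0^e * (ρ0*ρ1)^m)) := by
    intro g
    have hg : g ∈ Subgroup.closure {ρ0, ρ1, ρ2} := hgen ▸ Subgroup.mem_top g
    induction hg using Subgroup.closure_induction_left with
    | one => exact ⟨0, 0, 0, 0, by simp⟩
    | mul_left x hx y hy ih =>
        obtain ⟨i, j, e, m, rfl⟩ := ih
        simp only [Set.mem_insert_iff, Set.mem_singleton_iff] at hx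
        rcases hx with rfl | rfl | rfl
        · exact ⟨(s-1)*i, j, e+1, m, by simp only [MU0, MV0, Mρ0D]⟩
        · exact ⟨j, i, e+1, 3^e + m, by simp only [MU1, MV1, Mρ1D, MUV]⟩
        · exact ⟨i, (s-1)*j + (s-1), e+1, 3^e*2 + m, by simp only [MU2, MV2, Mρ2D, PV]⟩
    | inv_mul_cancel x hx y hy ih =>
        obtain ⟨i, j, e, m, rfl⟩ := ih
        simp only [Set.mem_insert_iff, Set.mem_singleton_iff] at hx
        rcases hx with rfl | rfl | rfl
        · exact ⟨(s-1)*i, j, e+1, m, by rw [i0]; simp only [MU0, MV0, Mρ0D]⟩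
        · exact ⟨j, i, e+1, 3^e + m, by rw [i1]; simp only [MU1, MV1, Mρ1D, MUV]⟩
        · exact ⟨i, (s-1)*j + (s-1), e+1, 3^e*2 + m, by
            rw [i2]; simp only [MU2, MV2, Mρ2D, PV]⟩
  haveI : NeZero s := ⟨by omega⟩
  letI : Fintype G := Fintype.ofFinite G
  have rup : ∀ x : ℕ, u ^ x = u ^ (x % s) := by
    intro x
    conv_lhs => rw [← Nat.div_add_mod x s]
    rw [pow_add, pow_mul, hus, one_pow, one_mul]
  have rvp : ∀ x : ℕ, v ^ x = v ^ (x % s) := by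
    intro x
    conv_lhs => rw [← Nat.div_add_mod x s]
    rw [pow_add, pow_mul, hvs, one_pow, one_mul]
  have r0p : ∀ x : ℕ, ρ0 ^ x = ρ0 ^ (x % 2) := by
    intro x
    conv_lhs => rw [← Nat.div_add_mod x 2]
    rw [pow_add, pow_mul, hr0, one_pow, one_mul]
  have r2p : ∀ x : ℕ, ρ2 ^ x = ρ2 ^ (x % 2) := by
    intro x
    conv_lhs => rw [← Nat.div_add_mod x 2]
    rw [pow_add, pow_mul, hr2, one_pow, one_mul]
  have rcp : ∀ x : ℕ, (ρ0*ρ1) ^ x = (ρ0*ρ1) ^ (x % 4) := by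
    intro x
    conv_lhs => rw [← Nat.div_add_mod x 4]
    rw [pow_add, pow_mul, h01, one_pow, one_mul]
  set F : ZMod s × ZMod s × ZMod 2 × ZMod 4 → G :=
    fun p => u^p.1.val * (v^p.2.1.val * (ρ0^p.2.2.1.val * (ρ0*ρ1)^p.2.2.2.val)) with hF
  have hFsurj : Function.Surjective F := by
    intro g
    obtain ⟨i, j, e, m, rfl⟩ := NFall g
    refine ⟨(↑i, ↑j, ↑e, ↑m), ?_⟩
    rw [hF]
    simp only [ZMod.val_natCast]
    rw [← rup, ← rvp, ← r0p, ← rcp]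
  have hFbij : Function.Bijective F := by
    rw [Fintype.bijective_iff_surjective_and_card]
    refine ⟨hFsurj, ?_⟩
    rw [← Nat.card_eq_fintype_card, ← Nat.card_eq_fintype_card, hG]
    simp only [Nat.card_eq_fintype_card, Fintype.card_prod, ZMod.card]
    ring
  have KEY : ∀ i j e m i' j' e' m' : ℕ,
      u^i * (v^j * (ρ0^e * (ρ0*ρ1)^m)) = u^i' * (v^j' * (ρ0^e' * (ρ0*ρ1)^m')) →
      i ≡ i' [MOD s] ∧ j ≡ j' [MOD s] ∧ e ≡ e' [MOD 2] ∧ m ≡ m' [MOD 4] := by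
    intro i j e m i' j' e' m' h
    have h2 : F (↑i, ↑j, ↑e, ↑m) = F (↑i', ↑j', ↑e', ↑m') := by
      rw [hF]
      simp only [ZMod.val_natCast]
      rw [← rup, ← rvp, ← r0p, ← rcp, ← rup i', ← rvp j', ← r0p e', ← rcp m']
      exact h
    have h3 := hFbij.1 h2
    rw [Prod.ext_iff, Prod.ext_iff, Prod.ext_iff] at h3
    obtain ⟨e1, e2, e3, e4⟩ := h3
    exact ⟨(ZMod.natCast_eq_natCast_iff _ _ _).1 e1, (ZMod.natCast_eq_natCast_iff _ _ _).1 e2,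
      (ZMod.natCast_eq_natCast_iff _ _ _).1 e3, (ZMod.natCast_eq_natCast_iff _ _ _).1 e4⟩
  have com0v : Commute ρ0 v := sv0
  have com2u : Commute ρ2 u := su2
  have com20 : Commute ρ2 ρ0 := c20
  have ME0U : ∀ (e i : ℕ) (x : G), ρ0^e * (u^i * x) = u^((s-1)^e * i) * (ρ0^e * x) := by
    intro e
    induction e with
    | zero => intro i x; simp
    | succ e ih =>
      intro i x
      rw [pow_succ ρ0 e, mul_assoc (ρ0^e) ρ0, MU0, ih, ← mul_assoc (ρ0^e) ρ0, ← pow_succ]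
      have h3 : (s-1)^e * ((s-1) * i) = (s-1)^(e+1) * i := by ring
      rw [h3]
  have ME2V : ∀ (f j : ℕ) (x : G), ρ2^f * (v^j * x) = v^((s-1)^f * j) * (ρ2^f * x) := by
    intro f
    induction f with
    | zero => intro j x; simp
    | succ f ih =>
      intro j x
      rw [pow_succ ρ2 f, mul_assoc (ρ2^f) ρ2, MV2, ih, ← mul_assoc (ρ2^f) ρ2, ← pow_succ]
      have h3 : (s-1)^f * ((s-1) * j) = (s-1)^(f+1) * j := by ring
      rw [h3]
  have ME0V : ∀ (e j : ℕ) (x : G), ρ0^e * (v^j * x) = v^j * (ρ0^e * x) := by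
    intro e j x; rw [← mul_assoc, (com0v.pow_pow e j).eq, mul_assoc]
  have ME2U : ∀ (f i : ℕ) (x : G), ρ2^f * (u^i * x) = u^i * (ρ2^f * x) := by
    intro f i x; rw [← mul_assoc, (com2u.pow_pow f i).eq, mul_assoc]
  have ME20 : ∀ (f e : ℕ) (x : G), ρ2^f * (ρ0^e * x) = ρ0^e * (ρ2^f * x) := by
    intro f e x; rw [← mul_assoc, (com20.pow_pow f e).eq, mul_assoc]
  have PR0 : ∀ (e e' : ℕ) (x : G), ρ0^e * (ρ0^e' * x) = ρ0^(e+e') * x := by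
    intro e e' x; rw [← mul_assoc, ← pow_add]
  have PR2 : ∀ (f f' : ℕ) (x : G), ρ2^f * (ρ2^f' * x) = ρ2^(f+f') * x := by
    intro f f' x; rw [← mul_assoc, ← pow_add]
  -- flat variants
  have ME2V' : ∀ (f j : ℕ), ρ2^f * v^j = v^((s-1)^f * j) * ρ2^f := by
    intro f j; simpa using ME2V f j 1
  have ME2U' : ∀ (f i : ℕ), ρ2^f * u^i = u^i * ρ2^f := by
    intro f i; simpa using ME2U f i 1
  have ME0U' : ∀ (e i : ℕ), ρ0^e * u^i = u^((s-1)^e * i) * ρ0^e := by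
    intro e i; simpa using ME0U e i 1
  have ME0V' : ∀ (e j : ℕ), ρ0^e * v^j = v^j * ρ0^e := by
    intro e j; simpa using ME0V e j 1
  have ME20' : ∀ (f e : ℕ), ρ2^f * ρ0^e = ρ0^e * ρ2^f := by
    intro f e; simpa using ME20 f e 1
  have MUV' : ∀ (j i : ℕ), v^j * u^i = u^i * v^j := by
    intro j i; simpa using MUV j i 1
  -- exponent mod lemmas
  have VEQ : ∀ j1 j2 : ℕ, j1 % s = j2 % s → v^j1 = v^j2 := by
    intro j1 j2 h; rw [rvp j1, rvp j2, h]
  have UEQ : ∀ i1 i2 : ℕ, i1 % s = i2 % s → u^i1 = u^i2 := by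
    intro i1 i2 h; rw [rup i1, rup i2, h]
  have sm1sq : (s-1) * (s-1) % s = 1 % s := by
    obtain ⟨t, rfl⟩ : ∃ t, s = t + 3 := ⟨s - 3, by omega⟩
    have : (t + 3 - 1) * (t + 3 - 1) = (t+3) * (t+1) + 1 := by
      have h1 : t + 3 - 1 = t + 2 := by omega
      rw [h1]; ring
    rw [this, Nat.mul_add_mod]
  have sm1_even : ∀ f : ℕ, f % 2 = 0 → (s-1)^f ≡ 1 [MOD s] := by
    intro f hf
    obtain ⟨k, rfl⟩ : ∃ k, f = 2*k := ⟨f/2, by omega⟩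
    calc (s-1)^(2*k) = ((s-1)*(s-1))^k := by rw [pow_mul, sq]
      _ ≡ 1^k [MOD s] := Nat.ModEq.pow k sm1sq
      _ = 1 := one_pow k
  have sm1_odd : ∀ f : ℕ, f % 2 = 1 → (s-1)^f ≡ (s-1) [MOD s] := by
    intro f hf
    obtain ⟨k, rfl⟩ : ∃ k, f = 2*k+1 := ⟨f/2, by omega⟩
    calc (s-1)^(2*k+1) = ((s-1)*(s-1))^k * (s-1) := by rw [pow_succ, pow_mul, sq]
      _ ≡ 1^k * (s-1) [MOD s] := Nat.ModEq.mul (Nat.ModEq.pow k sm1sq) Nat.ModEq.rfl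
      _ = (s-1) := by rw [one_pow, one_mul]
  -- the subgroup description of H
  have predmul : ∀ g1 g2 : G,
      (∃ i j e f : ℕ, a ∣ i ∧ b ∣ j ∧ g1 = u^i * (v^j * (ρ0^e * ρ2^f))) →
      (∃ i j e f : ℕ, a ∣ i ∧ b ∣ j ∧ g2 = u^i * (v^j * (ρ0^e * ρ2^f))) →
      (∃ i j e f : ℕ, a ∣ i ∧ b ∣ j ∧ g1 * g2 = u^i * (v^j * (ρ0^e * ρ2^f))) := by
    intro g1 g2 h1 h2
    obtain ⟨i1, j1, e1, f1, hi1, hj1, rfl⟩ := h1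
    obtain ⟨i2, j2, e2, f2, hi2, hj2, rfl⟩ := h2
    simp only [mul_assoc, ME2U, ME2V, ME20, ME0U, ME0V, MUV, PU, PV, PR0, PR2,
      ME2V', ME2U', ME0U', ME0V', ME20', MUV', ← pow_add]
    refine ⟨_, _, _, _, ?_, ?_, rfl⟩
    · exact dvd_add hi1 (hi2.mul_left _)
    · exact dvd_add hj1 (hj2.mul_left _)
  have predone : (∃ i j e f : ℕ, a ∣ i ∧ b ∣ j ∧ (1:G) = u^i * (v^j * (ρ0^e * ρ2^f))) :=
    ⟨0, 0, 0, 0, dvd_zero a, dvd_zero b, by simp⟩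
  have predpow : ∀ (g : G) (n : ℕ),
      (∃ i j e f : ℕ, a ∣ i ∧ b ∣ j ∧ g = u^i * (v^j * (ρ0^e * ρ2^f))) →
      (∃ i j e f : ℕ, a ∣ i ∧ b ∣ j ∧ g^n = u^i * (v^j * (ρ0^e * ρ2^f))) := by
    intro g n hg
    induction n with
    | zero => simpa using predone
    | succ n ih => rw [pow_succ]; exact predmul _ _ ih hg
  have predinv : ∀ g : G,
      (∃ i j e f : ℕ, a ∣ i ∧ b ∣ j ∧ g = u^i * (v^j * (ρ0^e * ρ2^f))) →
      (∃ i j e f : ℕ, a ∣ i ∧ b ∣ j ∧ g⁻¹ = u^i * (v^j * (ρ0^e * ρ2^f))) := by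
    intro g hg
    have h1 : g⁻¹ = g ^ (orderOf g - 1) := by
      have hpos : 0 < orderOf g := orderOf_pos g
      have : g * g ^ (orderOf g - 1) = 1 := by
        rw [← pow_succ']
        have h2 : orderOf g - 1 + 1 = orderOf g := by omega
        rw [h2, pow_orderOf_eq_one]
      exact inv_eq_of_mul_eq_one_right this
    rw [h1]; exact predpow g _ hg
  set HS : Subgroup G :=
    { carrier := {g : G | ∃ i j e f : ℕ, a ∣ i ∧ b ∣ j ∧ g = u^i * (v^j * (ρ0^e * ρ2^f))}
      one_mem' := predone
      mul_mem' := fun h1 h2 => predmul _ _ h1 h2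
      inv_mem' := fun h => predinv _ h } with hHS
  have hHSmem : ∀ g : G, g ∈ HS ↔
      ∃ i j e f : ℕ, a ∣ i ∧ b ∣ j ∧ g = u^i * (v^j * (ρ0^e * ρ2^f)) := fun g => Iff.rfl
  have hHeq : Subgroup.closure {u ^ a, v ^ b, ρ0, ρ2} = HS := by
    apply le_antisymm
    · rw [Subgroup.closure_le]
      intro g hg
      simp only [Set.mem_insert_iff, Set.mem_singleton_iff] at hg
      rcases hg with rfl | rfl | rfl | rfl
      · exact ⟨a, 0, 0, 0, dvd_rfl, dvd_zero b, by simp⟩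
      · exact ⟨0, b, 0, 0, dvd_zero a, dvd_rfl, by simp⟩
      · exact ⟨0, 0, 1, 0, dvd_zero a, dvd_zero b, by simp⟩
      · exact ⟨0, 0, 0, 1, dvd_zero a, dvd_zero b, by simp⟩
    · intro g hg
      obtain ⟨i, j, e, f, ⟨x, rfl⟩, ⟨y, rfl⟩, rfl⟩ := hg
      have hua : u^(a*x) ∈ Subgroup.closure {u ^ a, v ^ b, ρ0, ρ2} := by
        rw [pow_mul]
        exact Subgroup.pow_mem _ (Subgroup.subset_closure (by simp)) x
      have hvb : v^(b*y) ∈ Subgroup.closure {u ^ a, v ^ b, ρ0, ρ2} := by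
        rw [pow_mul]
        exact Subgroup.pow_mem _ (Subgroup.subset_closure (by simp)) y
      have hr0' : ρ0^e ∈ Subgroup.closure {u ^ a, v ^ b, ρ0, ρ2} :=
        Subgroup.pow_mem _ (Subgroup.subset_closure (by simp)) e
      have hr2' : ρ2^f ∈ Subgroup.closure {u ^ a, v ^ b, ρ0, ρ2} :=
        Subgroup.pow_mem _ (Subgroup.subset_closure (by simp)) f
      exact Subgroup.mul_mem _ hua (Subgroup.mul_mem _ hvb (Subgroup.mul_mem _ hr0' hr2'))
  have has : a ∣ s := hlcm ▸ Nat.dvd_lcm_left a b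
  have hbs : b ∣ s := hlcm ▸ Nat.dvd_lcm_right a b
  have dvd_mod_of : ∀ (d i n : ℕ), d ∣ i → d ∣ n → d ∣ i % n := by
    intro d i n h1 h2
    have h3 : i % n = i - n * (i / n) := by have := Nat.mod_add_div i n; omega
    rw [h3]; exact Nat.dvd_sub h1 (h2.mul_right _)
  have R0S' : ∀ (e : ℕ) (x : G), ρ0^e * (ρ0 * x) = ρ0^(e+1) * x := by
    intro e x; rw [← mul_assoc, ← pow_succ]
  have CONV0 : ∀ i j e : ℕ, u^i * (v^j * (ρ0^e * ρ2^0)) =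
      u^i * (v^j * (ρ0^e * (ρ0*ρ1)^0)) := by
    intro i j e; norm_num
  have CONV1 : ∀ i j e : ℕ, u^i * (v^j * (ρ0^e * ρ2^1)) =
      u^i * (v^(j+(s-1)) * (ρ0^(e+1) * (ρ0*ρ1)^2)) := by
    intro i j e
    rw [pow_one, hrho2]
    simp only [ME0V, R0S', PV]
  have MAIN1 : ∀ i j : ℕ, u^i * v^j ∈ HS → a ∣ i % s ∧ b ∣ j % s := by
    intro i j hm
    rw [hHSmem] at hm
    obtain ⟨i', j', e', f', hai', hbj', heq⟩ := hm
    rw [r2p f'] at heq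
    have hlhs : u^i * v^j = u^i * (v^j * (ρ0^0 * (ρ0*ρ1)^0)) := by simp
    rcases Nat.mod_two_eq_zero_or_one f' with hf' | hf'
    · rw [hf'] at heq
      have heq2 : u^i * (v^j * (ρ0^0 * (ρ0*ρ1)^0)) =
          u^i' * (v^j' * (ρ0^e' * (ρ0*ρ1)^0)) := by
        rw [← hlhs, heq]; simp
      obtain ⟨k1, k2, _, _⟩ := KEY _ _ _ _ _ _ _ _ heq2
      constructor
      · rw [k1]; exact dvd_mod_of a i' s hai' has
      · rw [k2]; exact dvd_mod_of b j' s hbj' hbs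
    · rw [hf'] at heq
      rw [CONV1] at heq
      have heq2 : u^i * (v^j * (ρ0^0 * (ρ0*ρ1)^0)) =
          u^i' * (v^(j'+(s-1)) * (ρ0^(e'+1) * (ρ0*ρ1)^2)) := by rw [← hlhs, heq]
      obtain ⟨_, _, _, k4⟩ := KEY _ _ _ _ _ _ _ _ heq2
      exact absurd k4 (by unfold Nat.ModEq; omega)
  -- cardinality of HS
  have hsa : a * (s/a) = s := Nat.mul_div_cancel' has
  have hsb : b * (s/b) = s := Nat.mul_div_cancel' hbs
  haveI : NeZero (s/a) := ⟨by intro h; rw [h, Nat.mul_zero] at hsa; omega⟩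
  haveI : NeZero (s/b) := ⟨by intro h; rw [h, Nat.mul_zero] at hsb; omega⟩
  have rua : ∀ x : ℕ, u^(a*x) = u^(a*(x % (s/a))) := by
    intro x
    refine UEQ _ _ ?_
    conv_lhs => rw [← Nat.div_add_mod x (s/a)]
    rw [Nat.mul_add, ← Nat.mul_assoc, hsa, Nat.mul_add_mod]
  have rvb : ∀ y : ℕ, v^(b*y) = v^(b*(y % (s/b))) := by
    intro y
    refine VEQ _ _ ?_
    conv_lhs => rw [← Nat.div_add_mod y (s/b)]
    rw [Nat.mul_add, ← Nat.mul_assoc, hsb, Nat.mul_add_mod]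
  set Φ : ZMod (s/a) × ZMod (s/b) × ZMod 2 × ZMod 2 → G :=
    fun p => u^(a*p.1.val) * (v^(b*p.2.1.val) * (ρ0^p.2.2.1.val * ρ2^p.2.2.2.val)) with hΦ
  have hΦmem : ∀ p, Φ p ∈ HS := fun p =>
    ⟨_, _, _, _, dvd_mul_right a _, dvd_mul_right b _, rfl⟩
  have hΦsurj : ∀ g ∈ HS, ∃ p, Φ p = g := by
    intro g hg
    obtain ⟨i, j, e, f, ⟨x, rfl⟩, ⟨y, rfl⟩, rfl⟩ := hg
    refine ⟨(↑x, ↑y, ↑e, ↑f), ?_⟩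
    rw [hΦ]
    simp only [ZMod.val_natCast]
    rw [← rua, ← rvb, ← r0p, ← r2p]
  have hΦinj : Function.Injective Φ := by
    intro p q h
    obtain ⟨px, py, pe, pf⟩ := p
    obtain ⟨qx, qy, qe, qf⟩ := q
    simp only [hΦ] at h
    have hres : a * px.val ≡ a * qx.val [MOD s] ∧ b * py.val ≡ b * qy.val [MOD s] ∧
        pe.val ≡ qe.val [MOD 2] ∧ pf.val = qf.val := by
      have hpf := ZMod.val_lt pf
      have hqf := ZMod.val_lt qf
      have hpf2 : pf.val = 0 ∨ pf.val = 1 := by omega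
      have hqf2 : qf.val = 0 ∨ qf.val = 1 := by omega
      rcases hpf2 with hp2 | hp2 <;> rcases hqf2 with hq2 | hq2 <;> rw [hp2, hq2] at h
      · rw [CONV0, CONV0] at h
        obtain ⟨k1, k2, k3, _⟩ := KEY _ _ _ _ _ _ _ _ h
        exact ⟨k1, k2, k3, by omega⟩
      · rw [CONV0, CONV1] at h
        obtain ⟨_, _, _, k4⟩ := KEY _ _ _ _ _ _ _ _ h
        exact absurd k4 (by unfold Nat.ModEq; omega)
      · rw [CONV1, CONV0] at h
        obtain ⟨_, _, _, k4⟩ := KEY _ _ _ _ _ _ _ _ h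
        exact absurd k4 (by unfold Nat.ModEq; omega)
      · rw [CONV1, CONV1] at h
        obtain ⟨k1, k2, k3, _⟩ := KEY _ _ _ _ _ _ _ _ h
        refine ⟨k1, Nat.ModEq.add_right_cancel' (s-1) k2, ?_, by omega⟩
        have := Nat.ModEq.add_right_cancel' 1 k3
        exact this
    obtain ⟨k1, k2, k3, k4⟩ := hres
    have hx : px = qx := by
      apply ZMod.val_injective
      have k1' : a * px.val ≡ a * qx.val [MOD a * (s/a)] := by rw [hsa]; exact k1
      have := Nat.ModEq.mul_left_cancel' (by omega : a ≠ 0) k1'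
      have h1 := ZMod.val_lt px
      have h2 := ZMod.val_lt qx
      unfold Nat.ModEq at this
      rw [Nat.mod_eq_of_lt h1, Nat.mod_eq_of_lt h2] at this
      exact this
    have hy : py = qy := by
      apply ZMod.val_injective
      have k2' : b * py.val ≡ b * qy.val [MOD b * (s/b)] := by rw [hsb]; exact k2
      have := Nat.ModEq.mul_left_cancel' (by omega : b ≠ 0) k2'
      have h1 := ZMod.val_lt py
      have h2 := ZMod.val_lt qy
      unfold Nat.ModEq at this
      rw [Nat.mod_eq_of_lt h1, Nat.mod_eq_of_lt h2] at this
      exact this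
    have he : pe = qe := by
      apply ZMod.val_injective
      have h1 := ZMod.val_lt pe
      have h2 := ZMod.val_lt qe
      unfold Nat.ModEq at k3
      rw [Nat.mod_eq_of_lt h1, Nat.mod_eq_of_lt h2] at k3
      exact k3
    have hf : pf = qf := ZMod.val_injective _ k4
    simp [hx, hy, he, hf]
  have hcardHS : Nat.card HS = (s/a) * ((s/b) * (2*2)) := by
    have hb2 : Function.Bijective (fun p => (⟨Φ p, hΦmem p⟩ : HS)) := by
      constructor
      · intro p q hpq
        apply hΦinj
        exact congrArg Subtype.val hpq
      · rintro ⟨g, hg⟩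
        obtain ⟨p, hp⟩ := hΦsurj g hg
        exact ⟨p, by simp [hp]⟩
    have hcard := Nat.card_eq_of_bijective _ hb2
    rw [← hcard]
    simp [Nat.card_prod, Nat.card_zmod]
  have hindex : HS.index = 2 * a * b := by
    have hmi : Nat.card HS * HS.index = Nat.card G := Subgroup.card_mul_index HS
    rw [hcardHS, hG] at hmi
    have hq : (s/a) * ((s/b) * (2*2)) * (2*a*b) = 8 * s^2 := by
      calc (s/a) * ((s/b) * (2*2)) * (2*a*b) = 8*((a*(s/a))*(b*(s/b))) := by ring
        _ = 8*(s*s) := by rw [hsa, hsb]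
        _ = 8*s^2 := by ring
    have hpos : 0 < (s/a) * ((s/b) * (2*2)) := by
      have h1 : 0 < s/a := Nat.pos_of_ne_zero (NeZero.ne _)
      have h2 : 0 < s/b := Nat.pos_of_ne_zero (NeZero.ne _)
      exact Nat.mul_pos h1 (Nat.mul_pos h2 (by norm_num))
    exact Nat.eq_of_mul_eq_mul_left hpos (by rw [hmi, ← hq])
  -- flat helpers
  have MU1' : ∀ i : ℕ, ρ1 * u^i = v^i * ρ1 := by intro i; simpa using MU1 i 1
  have MV1' : ∀ j : ℕ, ρ1 * v^j = u^j * ρ1 := by intro j; simpa using MV1 j 1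
  have ME2Vb : ∀ f : ℕ, ρ2^f * v = v^((s-1)^f) * ρ2^f := by
    intro f; simpa using ME2V' f 1
  have ME2Ub : ∀ f : ℕ, ρ2^f * u = u * ρ2^f := by
    intro f; simpa using ME2U' f 1
  have ME0Ubt : ∀ (e : ℕ) (x : G), ρ0^e * (u * x) = u^((s-1)^e) * (ρ0^e * x) := by
    intro e x
    have h := ME0U e 1 x
    simpa using h
  have GCOM : ∀ i j e f : ℕ, f % 2 = 1 →
      (u^i*(v^j*(ρ0^e*ρ2^f))) * v = v^(s-1) * (u^i*(v^j*(ρ0^e*ρ2^f))) := by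
    intro i j e f hf
    have hmod : (j + (s-1)^f) % s = ((s-1) + j) % s := by
      have h1 := Nat.ModEq.add_left j (sm1_odd f hf)
      have h2 : (s-1) + j = j + (s-1) := by omega
      rw [h2]; exact h1
    calc (u^i*(v^j*(ρ0^e*ρ2^f))) * v
        = u^i*(v^j*(ρ0^e*(ρ2^f*v))) := by simp only [mul_assoc]
      _ = u^i*(v^j*(v^((s-1)^f)*(ρ0^e*ρ2^f))) := by rw [ME2Vb, ME0V]
      _ = u^i*(v^(j+(s-1)^f)*(ρ0^e*ρ2^f)) := by rw [PV]
      _ = u^i*(v^((s-1)+j)*(ρ0^e*ρ2^f)) := by rw [VEQ _ _ hmod]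
      _ = v^(s-1) * (u^i*(v^j*(ρ0^e*ρ2^f))) := by rw [MUV, PV]
  have GCOMU : ∀ i j e f : ℕ, e % 2 = 1 →
      (u^i*(v^j*(ρ0^e*ρ2^f))) * u = u^(s-1) * (u^i*(v^j*(ρ0^e*ρ2^f))) := by
    intro i j e f he
    have hmod : (i + (s-1)^e) % s = ((s-1) + i) % s := by
      have h1 := Nat.ModEq.add_left i (sm1_odd e he)
      have h2 : (s-1) + i = i + (s-1) := by omega
      rw [h2]; exact h1
    calc (u^i*(v^j*(ρ0^e*ρ2^f))) * u
        = u^i*(v^j*(ρ0^e*(ρ2^f*u))) := by simp only [mul_assoc]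
      _ = u^i*(v^j*(ρ0^e*(u*ρ2^f))) := by rw [ME2Ub]
      _ = u^i*(v^j*(u^((s-1)^e)*(ρ0^e*ρ2^f))) := by rw [ME0Ubt]
      _ = u^i*(u^((s-1)^e)*(v^j*(ρ0^e*ρ2^f))) := by rw [MUV]
      _ = u^(i+(s-1)^e)*(v^j*(ρ0^e*ρ2^f)) := by rw [PU]
      _ = u^((s-1)+i)*(v^j*(ρ0^e*ρ2^f)) := by rw [UEQ _ _ hmod]
      _ = u^(s-1) * (u^i*(v^j*(ρ0^e*ρ2^f))) := by rw [PU]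
  have hN : HS.normalCore.Normal := Subgroup.normalCore_normal HS
  rw [hHeq]
  refine ⟨?_, hindex⟩
  rw [Subgroup.eq_bot_iff_forall]
  intro g hg
  have hgH : g ∈ HS := HS.normalCore_le hg
  obtain ⟨i, j, e, f, hai, hbj, hgeq⟩ := hgH
  rw [r0p e, r2p f] at hgeq
  have habs : u^2 ∈ HS.normalCore → v^2 ∈ HS.normalCore → False := by
    intro hu2 hv2
    have hu2H := MAIN1 2 0 (by simpa using HS.normalCore_le hu2)
    have hv2H := MAIN1 0 2 (by simpa using HS.normalCore_le hv2)
    have h2s : 2 % s = 2 := Nat.mod_eq_of_lt hs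
    rw [h2s] at hu2H hv2H
    have hs2 : s ∣ 2 := by have := Nat.lcm_dvd hu2H.1 hv2H.2; rwa [← hlcm] at this
    have := Nat.le_of_dvd (by norm_num) hs2
    omega
  rcases Nat.mod_two_eq_zero_or_one f with hf | hf
  · rcases Nat.mod_two_eq_zero_or_one e with he | he
    · -- pure translation
      rw [he, hf] at hgeq
      have hg2 : g = u^i * v^j := by rw [hgeq]; simp
      have hcj : ρ1 * g * ρ1⁻¹ = u^j * v^i := by
        rw [i1, hg2, ← mul_assoc ρ1 (u^i) (v^j)]
        calc ρ1 * u^i * v^j * ρ1 = v^i * (ρ1 * v^j) * ρ1 := by rw [MU1']; simp [mul_assoc]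
          _ = v^i * (u^j * ρ1) * ρ1 := by rw [MV1']
          _ = v^i * u^j * (ρ1 * ρ1) := by simp [mul_assoc]
          _ = u^j * v^i := by rw [m1, mul_one, MUV']
      have hmem := MAIN1 j i (by rw [← hcj]; exact HS.normalCore_le (hN.conj_mem _ hg ρ1))
      have h1 : a ∣ i % s := dvd_mod_of a i s hai has
      have h2 : b ∣ j % s := dvd_mod_of b j s hbj hbs
      have h3 : s ∣ i % s := by have := Nat.lcm_dvd h1 hmem.2; rwa [← hlcm] at this
      have h4 : s ∣ j % s := by have := Nat.lcm_dvd hmem.1 h2; rwa [← hlcm] at this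
      have h5 : i % s = 0 := by
        rcases Nat.eq_zero_or_pos (i % s) with h | h
        · exact h
        · exact absurd (Nat.le_of_dvd h h3) (by have := Nat.mod_lt i (show 0 < s by omega); omega)
      have h6 : j % s = 0 := by
        rcases Nat.eq_zero_or_pos (j % s) with h | h
        · exact h
        · exact absurd (Nat.le_of_dvd h h4) (by have := Nat.mod_lt j (show 0 < s by omega); omega)
      rw [hg2, rup i, rvp j, h5, h6]
      simp
    · -- e odd : commutator with u gives u^2
      exfalso
      have hgu : g * u = u^(s-1) * g := by
        rw [hgeq]; exact GCOMU i j (e % 2) (f % 2) (by omega)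
      have hcomm : u * g * u⁻¹ * g⁻¹ = u^2 := by
        rw [mul_inv_eq_iff_eq_mul, mul_inv_eq_iff_eq_mul, mul_assoc, hgu, PU,
          UEQ (2+(s-1)) 1 (by rw [show 2+(s-1) = s+1 by omega, Nat.add_mod_left]), pow_one]
      have hu2 : u^2 ∈ HS.normalCore := by
        rw [← hcomm]; exact mul_mem (hN.conj_mem _ hg u) (inv_mem hg)
      have hv2 : v^2 ∈ HS.normalCore := by
        have hconv : ρ1 * u^2 * ρ1⁻¹ = v^2 := by
          rw [i1, MU1', mul_assoc, m1, mul_one]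
        rw [← hconv]; exact hN.conj_mem _ hu2 ρ1
      exact habs hu2 hv2
  · -- f odd : commutator with v gives v^2
    exfalso
    have hgv : g * v = v^(s-1) * g := by
      rw [hgeq]; exact GCOM i j (e % 2) (f % 2) (by omega)
    have hcomm : v * g * v⁻¹ * g⁻¹ = v^2 := by
      rw [mul_inv_eq_iff_eq_mul, mul_inv_eq_iff_eq_mul, mul_assoc, hgv, PV,
        VEQ (2+(s-1)) 1 (by rw [show 2+(s-1) = s+1 by omega, Nat.add_mod_left]), pow_one]
    have hv2 : v^2 ∈ HS.normalCore := by
      rw [← hcomm]; exact mul_mem (hN.conj_mem _ hg v) (inv_mem hg)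
    have hu2 : u^2 ∈ HS.normalCore := by
      have hconv : ρ1 * v^2 * ρ1⁻¹ = u^2 := by
        rw [i1, MV1', mul_assoc, m1, mul_one]
      rw [← hconv]; exact hN.conj_mem _ hv2 ρ1
    exact habs hu2 hv2
end
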